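/- arXiv:1505.04269 — 4 statements merged into one kernel-verified Lean document; each statement's English description precedes it below -/
import Mathlib

section
/- If A is an element of Π_λ (a sequence of nonnegative integers, eventually 0 to the right, eventually periodic equal to a_{i mod n} to the left, with every sum of n consecutive terms at most k = a_0+...+a_{n-1}), then the array s_{i,j}(A) defined by s_{i,j}(A) = Σ_{l ≤ in+j(n-1)}(A_l - T^{i+j}_l) - Σ_{l=in+j(n-1)+1}^{(i+j)n} T^{i+j}_l satisfies the Gelfand-Tsetlin inequalities s_{i,j} ≥ s_{i+1,j} ≥ s_{i,j+1} for all integers i,j. -/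
open scoped BigOperators

/-- The reference sequence `T^m`: `T^m_i = 0` for `i > mn` and `T^m_i = a_i` otherwise
(where `a` is `n`-periodic, so `a i = a_{i mod n}`). -/
def Tseq (n : ℕ) (a : ℤ → ℤ) (m : ℤ) (i : ℤ) : ℤ :=
  if (m * n : ℤ) < i then 0 else a i

/-- Membership in the set `Π_λ`: integer sequences eventually `0` to the right,
eventually equal to the periodic sequence `a` to the left, nonnegative, and with
every sum of `n` consecutive terms at most `k = a_0 + ... + a_{n-1}`. -/
structure MemPi (n : ℕ) (a : ℤ → ℤ) (A : ℤ → ℤ) : Prop where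
  eventually_zero : ∃ N : ℤ, ∀ i, N ≤ i → A i = 0
  eventually_periodic : ∃ N : ℤ, ∀ i, i ≤ N → A i = a i
  nonneg : ∀ i, 0 ≤ A i
  window : ∀ i : ℤ,
    (∑ l ∈ Finset.Icc (i - n + 1) i, A l) ≤ ∑ l ∈ Finset.Icc (0 : ℤ) ((n : ℤ) - 1), a l

/-- The array `s_{i,j}(A)` associated with a sequence `A`:
`s_{i,j}(A) = Σ_{l ≤ in+j(n-1)} (A_l - T^{i+j}_l) - Σ_{l=in+j(n-1)+1}^{(i+j)n} T^{i+j}_l`. -/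
noncomputable def sPat (n : ℕ) (a A : ℤ → ℤ) (i j : ℤ) : ℤ :=
  (∑ᶠ l : ℤ, if l ≤ i * n + j * ((n : ℤ) - 1) then A l - Tseq n a (i + j) l else 0)
    - ∑ l ∈ Finset.Icc (i * n + j * ((n : ℤ) - 1) + 1) ((i + j) * n), Tseq n a (i + j) l

/-! Far to the left `A` agrees with `a` and with every `T^m`, so for `B` far enough to the left
`s_{i,j}(A) = Σ_{B<l≤in+j(n-1)} A_l - Σ_{B<l≤(i+j)n} a_l`. Passing from `s_{i,j+1}` to `s_{i+1,j}`
adds the single term `A_{(i+1)n+j(n-1)} ≥ 0` to the first sum; passing from `s_{i,j}` to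
`s_{i+1,j}` adds `n` consecutive terms of `A`, at most `k`, to the first sum and a full period
of `a`, exactly `k`, to the second. -/

namespace Finset

theorem sum_Ioc_add_sum_Ioc {α M : Type*} [LinearOrder α] [LocallyFiniteOrder α]
    [AddCommMonoid M] (f : α → M) {a b c : α} (hab : a ≤ b) (hbc : b ≤ c) :
    ∑ l ∈ Ioc a b, f l + ∑ l ∈ Ioc b c, f l = ∑ l ∈ Ioc a c, f l := by
  rw [← sum_union (Ioc_disjoint_Ioc_of_le le_rfl), Ioc_union_Ioc_eq_Ioc hab hbc]

end Finset

open Finset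

theorem Function.Periodic.sum_Ioc_add_eq {M : Type*} [AddCancelCommMonoid M] {a : ℤ → M}
    {n : ℕ} (h : Function.Periodic a n) (s t : ℤ) :
    ∑ l ∈ Ioc s (s + n), a l = ∑ l ∈ Ioc t (t + n), a l := by
  set g : ℤ → M := fun s ↦ ∑ l ∈ Ioc s (s + n), a l
  have hg : Function.Periodic g 1 := by
    intro s
    have h₁ : ∑ l ∈ Ioc s (s + n + 1), a l = a (s + 1) + g s := by
      rw [← insert_Ioc_right_eq_Ioc_add_one (by omega), sum_insert (by simp), add_right_comm, h]
    have h₂ : ∑ l ∈ Ioc s (s + n + 1), a l = a (s + 1) + g (s + 1) := by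
      rw [← insert_Ioc_add_one_left_eq_Ioc (by omega), sum_insert (by simp),
        show s + n + 1 = s + 1 + n by ring]
    exact add_left_cancel (h₂.symm.trans h₁)
  simpa using (hg.int_mul s 0).trans (hg.int_mul t 0).symm

theorem MemPi.sum_Ioc_le {n : ℕ} {a A : ℤ → ℤ} (hA : MemPi n a A)
    (hper : Function.Periodic a n) (s t : ℤ) :
    ∑ l ∈ Ioc s (s + n), A l ≤ ∑ l ∈ Ioc t (t + n), a l := by
  have hperiod : Icc (0 : ℤ) (n - 1) = Ioc (-1) (-1 + (n : ℤ)) := by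
    rw [← Icc_add_one_left_eq_Ioc]; congr 1
  have hwindow := hA.window (s + n)
  rwa [show s + n - n + 1 = s + 1 by ring, Icc_add_one_left_eq_Ioc, hperiod,
    hper.sum_Ioc_add_eq (-1) t] at hwindow

theorem sum_Ioc_Tseq_add_sum_Icc_Tseq (n : ℕ) (a : ℤ → ℤ) {m B x : ℤ} (hBx : B ≤ x)
    (hBm : B ≤ m * n) :
    ∑ l ∈ Ioc B x, Tseq n a m l + ∑ l ∈ Icc (x + 1) (m * n), Tseq n a m l
      = ∑ l ∈ Ioc B (m * n), a l := by
  have hT : ∑ l ∈ Ioc B (m * n), Tseq n a m l = ∑ l ∈ Ioc B (m * n), a l :=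
    sum_congr rfl fun l hl ↦ if_neg (not_lt.2 (mem_Ioc.1 hl).2)
  rw [Icc_add_one_left_eq_Ioc]
  rcases le_total x (m * n) with hxm | hmx
  · rw [sum_Ioc_add_sum_Ioc _ hBx hxm, hT]
  · have hzero : ∑ l ∈ Ioc (m * n) x, Tseq n a m l = 0 :=
      sum_eq_zero fun l hl ↦ if_pos (mem_Ioc.1 hl).1
    rw [Ioc_eq_empty_of_le hmx, sum_empty, add_zero, ← sum_Ioc_add_sum_Ioc _ hBm hmx, hzero,
      add_zero, hT]

theorem sPat_eq_sum_Ioc_sub_sum_Ioc (n : ℕ) (a A : ℤ → ℤ) {B : ℤ} (hB : ∀ l ≤ B, A l = a l)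
    (i j : ℤ) (hBM : B ≤ i * n + j * ((n : ℤ) - 1)) (hBm : B ≤ (i + j) * n) :
    sPat n a A i j
      = ∑ l ∈ Ioc B (i * n + j * ((n : ℤ) - 1)), A l - ∑ l ∈ Ioc B ((i + j) * n), a l := by
  set M := i * n + j * ((n : ℤ) - 1)
  have hsupp : Function.support (fun l ↦ if l ≤ M then A l - Tseq n a (i + j) l else 0)
      ⊆ Ioc B M := by
    intro l hl
    by_contra hlBM
    rw [coe_Ioc, Set.mem_Ioc, not_and_or, not_lt, not_le] at hlBM
    rcases hlBM with hlB | hMl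
    · refine hl ?_
      dsimp only
      rw [if_pos (hlB.trans hBM), hB l hlB, Tseq, if_neg (by omega), sub_self]
    · exact hl (if_neg (not_le.2 hMl))
  rw [sPat, finsum_eq_sum_of_support_subset _ hsupp,
    sum_congr rfl fun l hl ↦ if_pos (mem_Ioc.1 hl).2, sum_sub_distrib,
    ← sum_Ioc_Tseq_add_sum_Icc_Tseq n a hBM hBm]
  abel

theorem stmt0_general (n : ℕ) (a : ℤ → ℤ)
    (hper : ∀ i, a (i + n) = a i)
    (A : ℤ → ℤ) (hA : MemPi n a A) (i j : ℤ) :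
    sPat n a A i (j + 1) ≤ sPat n a A (i + 1) j ∧
      sPat n a A (i + 1) j ≤ sPat n a A i j := by
  obtain ⟨N, hN⟩ := hA.eventually_periodic
  set M := i * n + j * ((n : ℤ) - 1)
  set m := i + j
  set B := min N (min (M - 1) (m * n))
  have hB : ∀ l ≤ B, A l = a l := fun l hl ↦ hN l (hl.trans (min_le_left _ _))
  have hBM : B ≤ M - 1 := (min_le_right _ _).trans (min_le_left _ _)
  have hBm : B ≤ m * n := (min_le_right _ _).trans (min_le_right _ _)
  have hn : (0 : ℤ) ≤ n := n.cast_nonneg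
  have hs₀ := sPat_eq_sum_Ioc_sub_sum_Ioc n a A hB i j (by omega) hBm
  have hs₁ := sPat_eq_sum_Ioc_sub_sum_Ioc n a A hB (i + 1) j (by linarith) (by nlinarith)
  have hs₂ := sPat_eq_sum_Ioc_sub_sum_Ioc n a A hB i (j + 1) (by linarith) (by nlinarith)
  rw [show (i + 1) * n + j * ((n : ℤ) - 1) = M + n by ring,
    show i + 1 + j = m + 1 by ring] at hs₁
  rw [show i * n + (j + 1) * ((n : ℤ) - 1) = M + n - 1 by ring,
    show i + (j + 1) = m + 1 by ring] at hs₂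
  refine ⟨?_, ?_⟩
  · rw [hs₁, hs₂]
    gcongr
    · exact fun l _ _ ↦ hA.nonneg l
    · omega
  · rw [hs₀, hs₁, ← sum_Ioc_add_sum_Ioc _ (by omega : B ≤ M) (by omega : M ≤ M + n),
      show (m + 1) * n = m * n + n by ring,
      ← sum_Ioc_add_sum_Ioc _ hBm (by omega : m * n ≤ m * n + n)]
    have hwindow := hA.sum_Ioc_le hper M (m * n)
    linarith

/-- If `A ∈ Π_λ`, then the array `(s_{i,j}(A))` satisfies the Gelfand–Tsetlin
inequalities `s_{i,j} ≥ s_{i+1,j} ≥ s_{i,j+1}` for all integers `i, j`. -/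
theorem stmt0 (n : ℕ) (hn : 2 ≤ n) (a : ℤ → ℤ)
    (hper : ∀ i, a (i + n) = a i) (hpos : ∀ i, 0 ≤ a i)
    (hk : 0 < ∑ l ∈ Finset.Icc (0 : ℤ) ((n : ℤ) - 1), a l)
    (A : ℤ → ℤ) (hA : MemPi n a A) (i j : ℤ) :
    sPat n a A i (j + 1) ≤ sPat n a A (i + 1) j ∧
      sPat n a A (i + 1) j ≤ sPat n a A i j :=
  stmt0_general n a hper A hA i j
end

section
/- Let g be a face of D_Γ(b_1,...,b_{l_Γ}) (all b_i distinct) degenerating onto the vertex of the cone D_Γ(b,...,b) via the face map π. Then g belongs to π^{-1}(vertex), i.e. g is bounded, if and only if the subgraph Δ_g includes every edge joining two vertices that are both leftmost in their rows of Γ (joined diagonally), and every edge joining two vertices that are both rightmost in their rows of Γ. -/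
open scoped BigOperators Classical

noncomputable section

/-- Adjacency in the rotated square lattice `ℛ`: the neighbours of `(i,j)` are its
upper neighbours `(i-1,j)`, `(i-1,j+1)` and lower neighbours `(i+1,j)`, `(i+1,j-1)`. -/
def LatAdj (p q : ℤ × ℤ) : Prop :=
  q = (p.1 - 1, p.2) ∨ q = (p.1 - 1, p.2 + 1) ∨ q = (p.1 + 1, p.2) ∨ q = (p.1 + 1, p.2 - 1)

/-- The rotated square lattice `ℛ` as a simple graph on `ℤ × ℤ`. -/
def latticeGraph : SimpleGraph (ℤ × ℤ) := SimpleGraph.fromRel LatAdj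

/-- An ordinary subgraph of `ℛ`: a finite connected full subgraph such that whenever
`(i,j)` and `(i,j+1)` are vertices, so is `(i+1,j)`, and, if `i` is below the top row,
so is `(i-1,j+1)`. -/
structure OrdinaryGraph where
  verts : Finset (ℤ × ℤ)
  nonempty : verts.Nonempty
  connected : (latticeGraph.induce (verts : Set (ℤ × ℤ))).Connected
  prop2 : ∀ i j : ℤ, (i, j) ∈ verts → (i, j + 1) ∈ verts → (i + 1, j) ∈ verts
  prop3 : ∀ i j : ℤ, (i, j) ∈ verts → (i, j + 1) ∈ verts →
    (∃ p ∈ verts, p.1 < i) → (i - 1, j + 1) ∈ verts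

/-- The number `a_Γ` of the top row of an ordinary subgraph. -/
def OrdinaryGraph.top (Γ : OrdinaryGraph) : ℤ :=
  (Γ.verts.image Prod.fst).min' (Γ.nonempty.image _)

/-- The set of vertices of `Γ` in the top row. -/
def OrdinaryGraph.topRow (Γ : OrdinaryGraph) : Finset (ℤ × ℤ) :=
  Γ.verts.filter fun p => p.1 = Γ.top

/-- The number `l_Γ` of vertices of `Γ` in the top row. -/
def OrdinaryGraph.lG (Γ : OrdinaryGraph) : ℕ := Γ.topRow.card

/-- The boundary values `b` are nonincreasing from left to right along the top row. -/
def TopAntitone (Γ : OrdinaryGraph) (b : ℤ → ℤ) : Prop :=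
  ∀ j j' : ℤ, (Γ.top, j) ∈ Γ.verts → (Γ.top, j') ∈ Γ.verts → j ≤ j' → b j' ≤ b j

/-- The boundary values `b` are strictly decreasing from left to right along the top row. -/
def TopStrictAnti (Γ : OrdinaryGraph) (b : ℤ → ℤ) : Prop :=
  ∀ j j' : ℤ, (Γ.top, j) ∈ Γ.verts → (Γ.top, j') ∈ Γ.verts → j < j' → b j' < b j

/-- The polyhedron `D_Γ(b)`: real arrays `(s_{i,j})` vanishing outside `Γ`, with the
top-row coordinates fixed equal to the values of `b`, and satisfying
`s_{i-1,j} ≥ s_{i,j} ≥ s_{i-1,j+1}` for adjacent pairs of vertices of `Γ`. -/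
def DPoly (Γ : OrdinaryGraph) (b : ℤ → ℤ) : Set ((ℤ × ℤ) → ℝ) :=
  {s | (∀ p, p ∉ Γ.verts → s p = 0) ∧
    (∀ j : ℤ, (Γ.top, j) ∈ Γ.verts → s (Γ.top, j) = (b j : ℝ)) ∧
    (∀ i j : ℤ, (i, j) ∈ Γ.verts →
      (((i - 1, j) ∈ Γ.verts → s (i, j) ≤ s (i - 1, j)) ∧
       ((i - 1, j + 1) ∈ Γ.verts → s (i - 1, j + 1) ≤ s (i, j))))}

/-- A face of a polyhedron in the array space: a nonempty extreme subset. -/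
def IsFaceOf (P f : Set ((ℤ × ℤ) → ℝ)) : Prop := IsExtreme ℝ P f ∧ f.Nonempty

/-- The dimension of (the affine span of) a set of arrays. -/
def sdim (f : Set ((ℤ × ℤ) → ℝ)) : ℕ := Module.finrank ℝ (affineSpan ℝ f).direction

/-- The subgraph `Δ_f` of `Γ` associated to a face (or any set) `f`: two adjacent
vertices of `Γ` are joined iff the corresponding coordinates agree on all of `f`. -/
def deltaGraph (Γ : OrdinaryGraph) (f : Set ((ℤ × ℤ) → ℝ)) : SimpleGraph (ℤ × ℤ) :=
  SimpleGraph.fromRel fun p q =>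
    p ∈ Γ.verts ∧ q ∈ Γ.verts ∧ LatAdj p q ∧ ∀ s ∈ f, s p = s q

/-- The number of vertices in row `i` of the connected component `c` of the subgraph
`G` restricted to `Γ`. -/
def rowCount (Γ : OrdinaryGraph) (G : SimpleGraph (ℤ × ℤ))
    (c : (G.induce (Γ.verts : Set (ℤ × ℤ))).ConnectedComponent) (i : ℤ) : ℕ :=
  Nat.card {v : (Γ.verts : Set (ℤ × ℤ)) //
    (G.induce (Γ.verts : Set (ℤ × ℤ))).connectedComponentMk v = c ∧ (v : ℤ × ℤ).1 = i}

/-- The statistic `d_l` of a face `f`: the number of pairs `(E, i)` of a connected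
component `E` of `Δ_f` and a row `i` below the top row such that `E` has exactly `l-1`
vertices in row `i-1` and `l` vertices in row `i`. -/
def dstat (Γ : OrdinaryGraph) (f : Set ((ℤ × ℤ) → ℝ)) (l : ℕ) : ℕ :=
  Nat.card {ci : ((deltaGraph Γ f).induce (Γ.verts : Set (ℤ × ℤ))).ConnectedComponent × ℤ //
    Γ.top < ci.2 ∧ rowCount Γ (deltaGraph Γ f) ci.1 (ci.2 - 1) = l - 1 ∧
      rowCount Γ (deltaGraph Γ f) ci.1 ci.2 = l}

/-- The weight `φ_Γ(b)(f) = Π_l (1 - t^l)^{d_l}` of a face `f` of `D_Γ(b)`. -/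
def phiG (Γ : OrdinaryGraph) (f : Set ((ℤ × ℤ) → ℝ)) : Polynomial ℤ :=
  ∏ᶠ l ∈ Set.Ici 1, ((1 : Polynomial ℤ) - Polynomial.X ^ l) ^ dstat Γ f l


/-!
Both sides are equivalent to: for every `s ∈ g`, each entry of `s` below the top row lies
between two entries of the row above. This bounds `g` by induction on the rows. Conversely, if
on a bounded face an entry of row `r + 1` exceeded all of row `r`, raising every entry below
row `r` that is at least as large would be a direction in which `s` can move a little backwards
and arbitrarily far forwards inside `D_Γ(b)`, so the face would contain an unbounded ray.

On the combinatorial side, the rows of an ordinary graph are intervals (a walk between two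
vertices of a row is filled in row by row), and points of `D_Γ(b)` decrease along each row, so
row `r` attains its extremes at its ends. An entry of row `r + 1` without an upper neighbour
bounding it from above (below) is the left (right) end of its row, lying diagonally (directly)
below the left (right) end of row `r`; such an entry is bounded by row `r` exactly when the edge
joining the two ends is tight.
-/

theorem IsExtreme.add_smul_mem {𝕜 E : Type*} [Field 𝕜] [LinearOrder 𝕜] [IsStrictOrderedRing 𝕜]
    [AddCommGroup E] [Module 𝕜 E] {A B : Set E} (hAB : IsExtreme 𝕜 A B) {x v : E} (hx : x ∈ B)
    {ε : 𝕜} (hε : 0 < ε) (hA : ∀ t, -ε ≤ t → x + t • v ∈ A) {t : 𝕜} (ht : 0 ≤ t) :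
    x + t • v ∈ B := by
  rcases ht.eq_or_lt with rfl | ht
  · simpa using hx
  have hεt : ε + t ≠ 0 := by positivity
  refine hAB.right_mem_of_mem_openSegment (hA (-ε) le_rfl) (hA t (by linarith)) hx
    ⟨t / (ε + t), ε / (ε + t), by positivity, by positivity,
      by rw [← add_div, add_comm, div_self hεt], ?_⟩
  match_scalars <;> field_simp <;> ring

lemma eq_zero_of_forall_abs_add_mul_le {a c M : ℝ} (h : ∀ t : ℝ, 0 ≤ t → |a + t * c| ≤ M) :
    c = 0 := by
  by_contra hc
  have hc' : 0 < |c| := abs_pos.2 hc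
  have ha : |a| ≤ M := by simpa using h 0 le_rfl
  set t := (M + |a| + 1) / |c|
  have ht : t * |c| = M + |a| + 1 := div_mul_cancel₀ _ hc'.ne'
  have ht₀ : 0 < t := div_pos (by linarith [abs_nonneg a]) hc'
  have := h t ht₀.le
  have : |t * c| ≤ |a + t * c| + |a| := by simpa using abs_sub (a + t * c) a
  rw [abs_mul, abs_of_pos ht₀] at this
  linarith

lemma LatAdj.symm {p q : ℤ × ℤ} (h : LatAdj p q) : LatAdj q p := by
  obtain ⟨i, j⟩ := p; obtain ⟨i', j'⟩ := q
  simp only [LatAdj, Prod.mk.injEq] at h ⊢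
  omega

lemma LatAdj.ne {p q : ℤ × ℤ} (h : LatAdj p q) : p ≠ q := by
  rintro rfl
  simp only [LatAdj, Prod.ext_iff] at h
  omega

lemma latticeGraph_adj {p q : ℤ × ℤ} : latticeGraph.Adj p q ↔ LatAdj p q := by
  rw [latticeGraph, SimpleGraph.fromRel_adj]
  exact ⟨fun h => h.2.elim id LatAdj.symm, fun h => ⟨h.ne, Or.inl h⟩⟩

lemma exists_row_crossing {u v x y : ℤ × ℤ} (W : latticeGraph.Walk u v) (hx : x ∈ W.support)
    (hy : y ∈ W.support) {i : ℤ} (hxi : x.1 ≤ i) (hyi : i < y.1) :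
    ∃ d e : ℤ, (i, d) ∈ W.support ∧ (i + 1, e) ∈ W.support ∧ (e = d ∨ e = d - 1) := by
  let W' : latticeGraph.Walk x y := (W.takeUntil x hx).reverse.append (W.takeUntil y hy)
  have hsub : ∀ z ∈ W'.support, z ∈ W.support := by
    intro z hz
    rcases (SimpleGraph.Walk.mem_support_append_iff _ _).1 hz with hz | hz
    · rw [SimpleGraph.Walk.support_reverse, List.mem_reverse] at hz
      exact W.support_takeUntil_subset_support hx hz
    · exact W.support_takeUntil_subset_support hy hz
  obtain ⟨dt, hdt, hle, hgt⟩ := W'.exists_boundary_dart {z | z.1 ≤ i} hxi (by simpa using hyi)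
  have hfst := hsub _ (W'.dart_fst_mem_support_of_mem_darts hdt)
  have hsnd := hsub _ (W'.dart_snd_mem_support_of_mem_darts hdt)
  obtain ⟨⟨⟨a, d⟩, ⟨a', e⟩⟩, hadj⟩ := dt
  simp only [Set.mem_ofPred_eq, not_le, latticeGraph_adj, LatAdj, Prod.mk.injEq] at hle hgt hadj
  obtain rfl : a = i := by omega
  obtain rfl : a' = a + 1 := by omega
  exact ⟨d, e, hfst, hsnd, by omega⟩

namespace OrdinaryGraph

variable (Γ : OrdinaryGraph)

lemma top_le {p : ℤ × ℤ} (hp : p ∈ Γ.verts) : Γ.top ≤ p.1 :=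
  Finset.min'_le _ _ (Finset.mem_image_of_mem _ hp)

lemma exists_mem_top : ∃ j, (Γ.top, j) ∈ Γ.verts := by
  obtain ⟨p, hp, hp1⟩ := Finset.mem_image.1 (Finset.min'_mem _ (Γ.nonempty.image Prod.fst))
  exact ⟨p.2, by rwa [top, ← hp1]⟩

variable {Γ}

lemma mem_up_right {r t : ℤ} (h₁ : (r + 1, t) ∈ Γ.verts) (h₂ : (r + 1, t + 1) ∈ Γ.verts)
    (hr : Γ.top ≤ r) : (r, t + 1) ∈ Γ.verts := by
  obtain ⟨j, hj⟩ := Γ.exists_mem_top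
  simpa using Γ.prop3 (r + 1) t h₁ h₂ ⟨_, hj, by simp only; omega⟩

lemma exists_walk {p q : ℤ × ℤ} (hp : p ∈ Γ.verts) (hq : q ∈ Γ.verts) :
    ∃ W : latticeGraph.Walk p q, ∀ z ∈ W.support, z ∈ Γ.verts := by
  obtain ⟨W⟩ := Γ.connected.preconnected ⟨p, hp⟩ ⟨q, hq⟩
  let f := (SimpleGraph.Embedding.induce (G := latticeGraph) (Γ.verts : Set (ℤ × ℤ))).toHom
  refine ⟨W.map f, fun z hz => ?_⟩
  change z ∈ (W.map f).support at hz
  rw [SimpleGraph.Walk.support_map, List.mem_map] at hz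
  obtain ⟨w, -, rfl⟩ := hz
  exact w.2

def RowSpanned (Γ : OrdinaryGraph) (l : List (ℤ × ℤ)) : Prop :=
  ∀ i a b c : ℤ, (i, a) ∈ l → (i, b) ∈ l → min a b ≤ c → c ≤ max a b → (i, c) ∈ Γ.verts

lemma RowSpanned.mem_of_cons_up {x v : ℤ × ℤ} (W : latticeGraph.Walk x v)
    (hW : Γ.RowSpanned W.support) {k ca cb c : ℤ} (hu : (k + 1, ca) ∈ Γ.verts)
    (hx : x = (k, ca) ∨ x = (k, ca + 1))
    (hy : (k + 1, cb) ∈ W.support) (hc₁ : min ca cb ≤ c) (hc₂ : c ≤ max ca cb) :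
    (k + 1, c) ∈ Γ.verts := by
  obtain ⟨x₂, rfl, hx₂⟩ : ∃ x₂, x = (k, x₂) ∧ (x₂ = ca ∨ x₂ = ca + 1) := by
    rcases hx with rfl | rfl <;> simp
  obtain ⟨d, e, hd, he, hde⟩ :=
    exists_row_crossing W W.start_mem_support hy (i := k) le_rfl (by simp)
  have hk := W.start_mem_support
  have fill_below : ∀ t, min x₂ d ≤ t → t < max x₂ d → (k + 1, t) ∈ Γ.verts := fun t h₁ h₂ =>
    Γ.prop2 k t (hW k x₂ d t hk hd h₁ h₂.le) (hW k x₂ d (t + 1) hk hd (by omega) (by omega))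
  have : c = ca ∨ (min x₂ d ≤ c ∧ c < max x₂ d) ∨ (min e cb ≤ c ∧ c ≤ max e cb) := by omega
  rcases this with rfl | ⟨h₁, h₂⟩ | ⟨h₁, h₂⟩
  · exact hu
  · exact fill_below c h₁ h₂
  · exact hW (k + 1) e cb c he hy h₁ h₂

lemma RowSpanned.mem_of_cons_down {x v : ℤ × ℤ} (W : latticeGraph.Walk x v)
    (hW : Γ.RowSpanned W.support) {k ca cb c : ℤ} (hu : (k, ca) ∈ Γ.verts)
    (hx : x = (k + 1, ca) ∨ x = (k + 1, ca - 1))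
    (hy : (k, cb) ∈ W.support) (hc₁ : min ca cb ≤ c) (hc₂ : c ≤ max ca cb) :
    (k, c) ∈ Γ.verts := by
  obtain ⟨x₂, rfl, hx₂⟩ : ∃ x₂, x = (k + 1, x₂) ∧ (x₂ = ca ∨ x₂ = ca - 1) := by
    rcases hx with rfl | rfl <;> simp
  obtain ⟨d, e, hd, he, hde⟩ :=
    exists_row_crossing W hy W.start_mem_support (i := k) le_rfl (by simp)
  have hk := W.start_mem_support
  have fill_above : ∀ t, min x₂ e < t → t ≤ max x₂ e → (k, t) ∈ Γ.verts := fun t h₁ h₂ => by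
    simpa using mem_up_right (hW (k + 1) x₂ e (t - 1) hk he (by omega) (by omega))
      (by simpa using hW (k + 1) x₂ e t hk he h₁.le h₂) (Γ.top_le hu)
  have : c = ca ∨ (min x₂ e < c ∧ c ≤ max x₂ e) ∨ (min d cb ≤ c ∧ c ≤ max d cb) := by omega
  rcases this with rfl | ⟨h₁, h₂⟩ | ⟨h₁, h₂⟩
  · exact hu
  · exact fill_above c h₁ h₂
  · exact hW k d cb c hd hy h₁ h₂

lemma rowSpanned_support {u v : ℤ × ℤ} (W : latticeGraph.Walk u v)
    (hW : ∀ z ∈ W.support, z ∈ Γ.verts) : Γ.RowSpanned W.support := by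
  induction W with
  | nil =>
    intro i a b c ha hb h₁ h₂
    simp only [SimpleGraph.Walk.support_nil, List.mem_singleton] at ha hb hW
    obtain ⟨-, rfl⟩ := Prod.ext_iff.1 (ha.trans hb.symm)
    obtain rfl : c = a := by omega
    exact ha ▸ hW _ rfl
  | @cons u x v hadj W ih =>
    simp only [SimpleGraph.Walk.support_cons, List.mem_cons, forall_eq_or_imp] at hW
    have ih := ih hW.2
    have step : ∀ {i ca cb c : ℤ}, u = (i, ca) → (i, cb) ∈ W.support → min ca cb ≤ c →
        c ≤ max ca cb → (i, c) ∈ Γ.verts := by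
      rintro i ca cb c rfl hy h₁ h₂
      rw [latticeGraph_adj, LatAdj] at hadj
      rcases hadj with h | h | h | h
      · simpa using ih.mem_of_cons_up W (k := i - 1) (by simpa using hW.1) (Or.inl h)
          (by simpa using hy) h₁ h₂
      · simpa using ih.mem_of_cons_up W (k := i - 1) (by simpa using hW.1) (Or.inr h)
          (by simpa using hy) h₁ h₂
      · exact ih.mem_of_cons_down W hW.1 (Or.inl h) hy h₁ h₂
      · exact ih.mem_of_cons_down W hW.1 (Or.inr h) hy h₁ h₂
    intro i a b c ha hb h₁ h₂
    simp only [SimpleGraph.Walk.support_cons, List.mem_cons] at ha hb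
    rcases ha with ha | ha <;> rcases hb with hb | hb
    · obtain ⟨-, rfl⟩ := Prod.ext_iff.1 (ha.trans hb.symm)
      obtain rfl : c = a := by omega
      exact ha ▸ hW.1
    · exact step ha.symm hb h₁ h₂
    · exact step hb.symm ha (min_comm a b ▸ h₁) (max_comm a b ▸ h₂)
    · exact ih i a b c ha hb h₁ h₂

lemma mem_of_le_of_le {i a b c : ℤ} (ha : (i, a) ∈ Γ.verts) (hb : (i, b) ∈ Γ.verts)
    (hac : a ≤ c) (hcb : c ≤ b) : (i, c) ∈ Γ.verts := by
  obtain ⟨W, hW⟩ := exists_walk ha hb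
  exact rowSpanned_support W hW i a b c W.start_mem_support W.end_mem_support
    (by omega) (by omega)

variable {r e : ℤ}

lemma mem_up_or_mem_up_right (he : (r + 1, e) ∈ Γ.verts) (hr : Γ.top ≤ r) :
    (r, e) ∈ Γ.verts ∨ (r, e + 1) ∈ Γ.verts := by
  obtain ⟨j, hj⟩ := Γ.exists_mem_top
  obtain ⟨W, hW⟩ := exists_walk hj he
  obtain ⟨d, e', hd, he', hde⟩ :=
    exists_row_crossing W W.start_mem_support W.end_mem_support (i := r) hr (by simp)
  replace hd := hW _ hd
  replace he' := hW _ he'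
  rcases lt_trichotomy e' e with h | rfl | h
  · left
    simpa using mem_up_right (mem_of_le_of_le he' he (c := e - 1) (by omega) (by omega))
      (by simpa using he) hr
  · rcases hde with rfl | rfl
    · exact Or.inl hd
    · exact Or.inr (by simpa using hd)
  · exact Or.inr (mem_up_right he (mem_of_le_of_le he he' (by omega) (by omega)) hr)

lemma leftmost_of_not_mem_up (he : (r + 1, e) ∈ Γ.verts) (hr : Γ.top ≤ r)
    (hne : (r, e) ∉ Γ.verts) :
    (r, e + 1) ∈ Γ.verts ∧ (∀ j, (r, j) ∈ Γ.verts → e + 1 ≤ j) ∧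
      (∀ j, (r + 1, j) ∈ Γ.verts → e ≤ j) := by
  have h₁ := (mem_up_or_mem_up_right he hr).resolve_left hne
  refine ⟨h₁, fun j hj => ?_, fun j hj => ?_⟩ <;> by_contra! h
  · exact hne (mem_of_le_of_le hj h₁ (by omega) (by omega))
  · have hleft : (r + 1, e - 1) ∈ Γ.verts := mem_of_le_of_le hj he (by omega) (by omega)
    exact hne (by simpa using mem_up_right hleft (by simpa using he) hr)

lemma rightmost_of_not_mem_up_right (he : (r + 1, e) ∈ Γ.verts) (hr : Γ.top ≤ r)
    (hne : (r, e + 1) ∉ Γ.verts) :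
    (r, e) ∈ Γ.verts ∧ (∀ j, (r, j) ∈ Γ.verts → j ≤ e) ∧
      (∀ j, (r + 1, j) ∈ Γ.verts → j ≤ e) := by
  have h₁ := (mem_up_or_mem_up_right he hr).resolve_right hne
  refine ⟨h₁, fun j hj => ?_, fun j hj => ?_⟩ <;> by_contra! h
  · exact hne (mem_of_le_of_le h₁ hj (by omega) (by omega))
  · exact hne (mem_up_right he (mem_of_le_of_le he hj (by omega) (by omega)) hr)

end OrdinaryGraph

open OrdinaryGraph

lemma TopStrictAnti.topAntitone {Γ : OrdinaryGraph} {b : ℤ → ℤ} (hb : TopStrictAnti Γ b) :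
    TopAntitone Γ b := fun j j' hj hj' hjj' =>
  hjj'.eq_or_lt.elim (fun h => h ▸ le_rfl) fun h => (hb j j' hj hj' h).le

namespace DPoly

variable {Γ : OrdinaryGraph} {b : ℤ → ℤ} {s : (ℤ × ℤ) → ℝ}

lemma le_up (hs : s ∈ DPoly Γ b) {r j : ℤ} (h : (r + 1, j) ∈ Γ.verts) (h' : (r, j) ∈ Γ.verts) :
    s (r + 1, j) ≤ s (r, j) := by
  simpa using (hs.2.2 (r + 1) j h).1 (by simpa using h')

lemma up_right_le (hs : s ∈ DPoly Γ b) {r j : ℤ} (h : (r + 1, j) ∈ Γ.verts)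
    (h' : (r, j + 1) ∈ Γ.verts) : s (r, j + 1) ≤ s (r + 1, j) := by
  simpa using (hs.2.2 (r + 1) j h).2 (by simpa using h')

lemma apply_succ_le (hb : TopAntitone Γ b) (hs : s ∈ DPoly Γ b) {i t : ℤ}
    (h : (i, t) ∈ Γ.verts) (h' : (i, t + 1) ∈ Γ.verts) : s (i, t + 1) ≤ s (i, t) := by
  rcases (Γ.top_le h).eq_or_lt with htop | htop
  · obtain rfl : Γ.top = i := htop
    rw [hs.2.1 _ h, hs.2.1 _ h']
    exact_mod_cast hb t (t + 1) h h' (by omega)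
  · obtain ⟨r, rfl⟩ : ∃ r, i = r + 1 := ⟨i - 1, by ring⟩
    have hup := mem_up_right h h' (by simp only at htop; omega)
    exact (le_up hs h' hup).trans (up_right_le hs h hup)

lemma antitone_row (hb : TopAntitone Γ b) (hs : s ∈ DPoly Γ b) {i c c' : ℤ}
    (hc : (i, c) ∈ Γ.verts) (hc' : (i, c') ∈ Γ.verts) (hcc' : c ≤ c') : s (i, c') ≤ s (i, c) := by
  induction c', hcc' using Int.leInduction with
  | base => exact le_rfl
  | succ t ht ih =>
    have hmid := mem_of_le_of_le hc hc' ht (by omega)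
    exact (apply_succ_le hb hs hmid hc').trans (ih hmid)

/-- On the constraints tight at `s`, the two values of `w` agree (apply `hw` both ways); the
slack constraints leave room for a small backward step. -/
lemma exists_add_smul_mem (hs : s ∈ DPoly Γ b) {w : (ℤ × ℤ) → ℝ}
    (hw₀ : ∀ p ∉ Γ.verts, w p = 0) (hw_top : ∀ j, w (Γ.top, j) = 0)
    (hw : ∀ p ∈ Γ.verts, ∀ q ∈ Γ.verts, LatAdj p q → s p ≤ s q → w p ≤ w q) :
    ∃ ε > (0 : ℝ), ∀ t : ℝ, -ε ≤ t → s + t • w ∈ DPoly Γ b := by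
  have hsmall : ∀ᶠ ε in nhds (0 : ℝ), ∀ p ∈ Γ.verts, ∀ q ∈ Γ.verts,
      s p < s q → ε * (w q - w p) ≤ s q - s p := by
    simp only [Filter.eventually_all_finset]
    intro p _ q _
    by_cases hpq : s p < s q
    · have hlim : Filter.Tendsto (fun ε : ℝ => ε * (w q - w p)) (nhds 0) (nhds 0) :=
        (continuous_mul_const _).tendsto' 0 0 (zero_mul _)
      exact (hlim.eventually_lt_const (sub_pos.2 hpq)).mono fun ε hε _ => hε.le
    · exact Filter.Eventually.of_forall fun _ h => absurd h hpq
  obtain ⟨ε, hεsmall, hεpos⟩ :=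
    ((hsmall.filter_mono nhdsWithin_le_nhds).and (self_mem_nhdsWithin (s := Set.Ioi 0))).exists
  have key : ∀ p ∈ Γ.verts, ∀ q ∈ Γ.verts, LatAdj p q → s p ≤ s q →
      ∀ t, -ε ≤ t → s p + t * w p ≤ s q + t * w q := by
    intro p hp q hq hpq hle t ht
    have hwpq := hw p hp q hq hpq hle
    rcases hle.lt_or_eq with hlt | heq
    · rcases le_or_gt 0 t with ht₀ | ht₀
      · nlinarith
      · have := hεsmall p hp q hq hlt
        nlinarith
    · rw [heq, le_antisymm hwpq (hw q hq p hp hpq.symm heq.ge)]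
  refine ⟨ε, hεpos, fun t ht =>
    ⟨fun p hp => ?_, fun j hj => ?_, fun i j hij => ⟨fun h => ?_, fun h => ?_⟩⟩⟩
  · simp [hs.1 p hp, hw₀ p hp]
  · simp [hs.2.1 j hj, hw_top j]
  · exact key _ hij _ h (by simp [LatAdj]) ((hs.2.2 i j hij).1 h) t ht
  · exact key _ h _ hij (by simp [LatAdj]) ((hs.2.2 i j hij).2 h) t ht

end DPoly

def BoundedByRowAbove (Γ : OrdinaryGraph) (s : (ℤ × ℤ) → ℝ) : Prop :=
  ∀ r e : ℤ, Γ.top ≤ r → (r + 1, e) ∈ Γ.verts →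
    (∃ j, (r, j) ∈ Γ.verts ∧ s (r + 1, e) ≤ s (r, j)) ∧
    (∃ j, (r, j) ∈ Γ.verts ∧ s (r, j) ≤ s (r + 1, e))

section

variable {Γ : OrdinaryGraph} {b : ℤ → ℤ} {g : Set ((ℤ × ℤ) → ℝ)} {s : (ℤ × ℤ) → ℝ}

/-- Otherwise the direction `σ` on the entries below row `r` where `σ * s` is at least
`σ * s (r + 1, e)`, and `0` elsewhere, would carry the face along an unbounded ray. -/
lemma exists_mul_le_of_bounded (hg : IsFaceOf (DPoly Γ b) g)
    (hM : ∃ M : ℝ, ∀ s ∈ g, ∀ p, |s p| ≤ M) (hs : s ∈ g) {σ : ℝ} (hσ : σ ≠ 0) {r e : ℤ}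
    (hr : Γ.top ≤ r) (he : (r + 1, e) ∈ Γ.verts) :
    ∃ j, (r, j) ∈ Γ.verts ∧ σ * s (r + 1, e) ≤ σ * s (r, j) := by
  by_contra! hlt
  set U : Set (ℤ × ℤ) := {v | v ∈ Γ.verts ∧ r < v.1 ∧ σ * s (r + 1, e) ≤ σ * s v}
  have hU : ∀ p ∈ U, ∀ q ∈ Γ.verts, LatAdj p q → σ * s p ≤ σ * s q → q ∈ U := by
    rintro p ⟨-, hp, hps⟩ q hq hpq hle
    refine ⟨hq, ?_, hps.trans hle⟩
    have hrow : q.1 = p.1 - 1 ∨ q.1 = p.1 + 1 := by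
      rcases hpq with h | h | h | h <;> simp [h]
    by_contra! hq₁
    obtain ⟨q₁, q₂⟩ := q
    obtain rfl : q₁ = r := by simp only at hrow hq₁; omega
    exact (hlt q₂ hq).not_ge (hps.trans hle)
  have hind : ∀ {p q}, (p ∈ U → q ∈ U) → U.indicator (1 : (ℤ × ℤ) → ℝ) p ≤ U.indicator 1 q := by
    intro p q h
    by_cases hp : p ∈ U
    · simp [hp, h hp]
    · simp only [hp, not_false_eq_true, Set.indicator_of_notMem]
      exact Set.indicator_nonneg (fun _ _ => zero_le_one) q
  obtain ⟨ε, hε, hray⟩ := DPoly.exists_add_smul_mem (hg.1.subset hs)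
    (w := fun v => σ * U.indicator 1 v)
    (fun p hp => by simp [Set.indicator_of_notMem (fun h : p ∈ U => hp h.1)])
    (fun j => by simp [Set.indicator_of_notMem (fun h : (Γ.top, j) ∈ U => by
      have := h.2.1; simp only at this; omega)])
    (fun p hp q hq hpq hle => hσ.lt_or_gt.elim
      (fun hσ => mul_le_mul_of_nonpos_left
        (hind (hU q · p hp hpq.symm (mul_le_mul_of_nonpos_left hle hσ.le))) hσ.le)
      (fun hσ => mul_le_mul_of_nonneg_left
        (hind (hU p · q hq hpq (mul_le_mul_of_nonneg_left hle hσ.le))) hσ.le))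
  obtain ⟨M, hM⟩ := hM
  refine hσ (eq_zero_of_forall_abs_add_mul_le (a := s (r + 1, e)) (M := M) fun t ht => ?_)
  have hq : (r + 1, e) ∈ U := ⟨he, by simp, le_rfl⟩
  simpa [hq] using hM _ (hg.1.add_smul_mem hs hε hray ht) (r + 1, e)

lemma boundedByRowAbove_of_bounded (hg : IsFaceOf (DPoly Γ b) g)
    (hM : ∃ M : ℝ, ∀ s ∈ g, ∀ p, |s p| ≤ M) (hs : s ∈ g) : BoundedByRowAbove Γ s :=
  fun _ _ hr he =>
    ⟨by simpa using exists_mul_le_of_bounded hg hM hs one_ne_zero hr he,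
     by simpa using exists_mul_le_of_bounded hg hM hs (neg_ne_zero.2 one_ne_zero) hr he⟩

lemma abs_le_of_boundedByRowAbove (hs : s ∈ DPoly Γ b) (hrow : BoundedByRowAbove Γ s)
    (p : ℤ × ℤ) : |s p| ≤ ∑ q ∈ Γ.verts, |(b q.2 : ℝ)| := by
  set M := ∑ q ∈ Γ.verts, |(b q.2 : ℝ)|
  by_cases hp : p ∈ Γ.verts
  swap
  · rw [hs.1 p hp, abs_zero]
    exact Finset.sum_nonneg fun _ _ => abs_nonneg _
  suffices ∀ r, Γ.top ≤ r → ∀ e, (r, e) ∈ Γ.verts → |s (r, e)| ≤ M from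
    this p.1 (Γ.top_le hp) p.2 hp
  intro r hr
  induction r, hr using Int.leInduction with
  | base =>
    intro e he
    rw [hs.2.1 e he]
    exact Finset.single_le_sum (f := fun q => |(b q.2 : ℝ)|) (fun _ _ => abs_nonneg _) he
  | succ r hr ih =>
    intro e he
    obtain ⟨⟨j, hj, hle⟩, ⟨j', hj', hge⟩⟩ := hrow r e hr he
    have := abs_le.1 (ih j hj)
    have := abs_le.1 (ih j' hj')
    exact abs_le.2 ⟨by linarith, by linarith⟩

lemma boundedByRowAbove_of_eq (hs : s ∈ DPoly Γ b)
    (hL : ∀ i j : ℤ, (i, j) ∈ Γ.verts → (i + 1, j - 1) ∈ Γ.verts →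
      (∀ j', (i, j') ∈ Γ.verts → j ≤ j') → (∀ j', (i + 1, j') ∈ Γ.verts → j - 1 ≤ j') →
      s (i, j) = s (i + 1, j - 1))
    (hR : ∀ i j : ℤ, (i, j) ∈ Γ.verts → (i + 1, j) ∈ Γ.verts →
      (∀ j', (i, j') ∈ Γ.verts → j' ≤ j) → (∀ j', (i + 1, j') ∈ Γ.verts → j' ≤ j) →
      s (i, j) = s (i + 1, j)) :
    BoundedByRowAbove Γ s := by
  intro r e hr he
  constructor
  · by_cases h : (r, e) ∈ Γ.verts
    · exact ⟨e, h, DPoly.le_up hs he h⟩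
    · obtain ⟨h₁, h₂, h₃⟩ := leftmost_of_not_mem_up he hr h
      have := hL r (e + 1) h₁ (by simpa using he) h₂ (by simpa using h₃)
      exact ⟨e + 1, h₁, by simpa using this.ge⟩
  · by_cases h : (r, e + 1) ∈ Γ.verts
    · exact ⟨e + 1, h, DPoly.up_right_le hs he h⟩
    · obtain ⟨h₁, h₂, h₃⟩ := rightmost_of_not_mem_up_right he hr h
      exact ⟨e, h₁, (hR r e h₁ he h₂ h₃).le⟩

namespace BoundedByRowAbove

variable (hrow : BoundedByRowAbove Γ s) (hb : TopAntitone Γ b) (hs : s ∈ DPoly Γ b) {i j : ℤ}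
include hrow hb hs

lemma eq_of_leftmost (hp : (i, j) ∈ Γ.verts) (hq : (i + 1, j - 1) ∈ Γ.verts)
    (hleft : ∀ j', (i, j') ∈ Γ.verts → j ≤ j') : s (i, j) = s (i + 1, j - 1) := by
  obtain ⟨j', hj', hle⟩ := (hrow i (j - 1) (Γ.top_le hp) hq).1
  refine le_antisymm ?_ (hle.trans (DPoly.antitone_row hb hs hp hj' (hleft j' hj')))
  simpa using DPoly.up_right_le hs hq (by simpa using hp)

lemma eq_of_rightmost (hp : (i, j) ∈ Γ.verts) (hq : (i + 1, j) ∈ Γ.verts)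
    (hright : ∀ j', (i, j') ∈ Γ.verts → j' ≤ j) : s (i, j) = s (i + 1, j) := by
  obtain ⟨j', hj', hge⟩ := (hrow i j (Γ.top_le hp) hq).2
  exact le_antisymm ((DPoly.antitone_row hb hs hj' hp (hright j' hj')).trans hge)
    (DPoly.le_up hs hq hp)

end BoundedByRowAbove

lemma deltaGraph_adj_iff {p q : ℤ × ℤ} (hp : p ∈ Γ.verts) (hq : q ∈ Γ.verts) (hpq : LatAdj p q) :
    (deltaGraph Γ g).Adj p q ↔ ∀ s ∈ g, s p = s q := by
  rw [deltaGraph, SimpleGraph.fromRel_adj]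
  refine ⟨?_, fun h => ⟨hpq.ne, Or.inl ⟨hp, hq, hpq, h⟩⟩⟩
  rintro ⟨-, ⟨-, -, -, h⟩ | ⟨-, -, -, h⟩⟩
  · exact h
  · exact fun s hs => (h s hs).symm

end

/-- A face `g` of `D_Γ(b_1, ..., b_{l_Γ})` (with the `b_i` pairwise distinct) is bounded
if and only if its subgraph `Δ_g` includes every edge joining two vertices of `Γ` that
are both leftmost in their respective rows, and every edge joining two vertices of `Γ`
that are both rightmost in their respective rows. -/
theorem stmt14 (Γ : OrdinaryGraph) (b : ℤ → ℤ) (hb : TopStrictAnti Γ b)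
    (g : Set ((ℤ × ℤ) → ℝ)) (hg : IsFaceOf (DPoly Γ b) g) :
    (∃ M : ℝ, ∀ s ∈ g, ∀ p, |s p| ≤ M) ↔
      ((∀ i j : ℤ, (i, j) ∈ Γ.verts → (i + 1, j - 1) ∈ Γ.verts →
          (∀ j', (i, j') ∈ Γ.verts → j ≤ j') → (∀ j', (i + 1, j') ∈ Γ.verts → j - 1 ≤ j') →
          (deltaGraph Γ g).Adj (i, j) (i + 1, j - 1)) ∧
       (∀ i j : ℤ, (i, j) ∈ Γ.verts → (i + 1, j) ∈ Γ.verts →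
          (∀ j', (i, j') ∈ Γ.verts → j' ≤ j) → (∀ j', (i + 1, j') ∈ Γ.verts → j' ≤ j) →
          (deltaGraph Γ g).Adj (i, j) (i + 1, j))) := by
  have hdiag : ∀ i j : ℤ, LatAdj (i, j) (i + 1, j - 1) := by simp [LatAdj]
  have hvert : ∀ i j : ℤ, LatAdj (i, j) (i + 1, j) := by simp [LatAdj]
  constructor
  · intro hM
    have hrow s (hs : s ∈ g) := boundedByRowAbove_of_bounded hg hM hs
    refine ⟨fun i j hp hq hleft _ => ?_, fun i j hp hq hright _ => ?_⟩
    · exact (deltaGraph_adj_iff hp hq (hdiag i j)).2 fun s hs =>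
        (hrow s hs).eq_of_leftmost hb.topAntitone (hg.1.subset hs) hp hq hleft
    · exact (deltaGraph_adj_iff hp hq (hvert i j)).2 fun s hs =>
        (hrow s hs).eq_of_rightmost hb.topAntitone (hg.1.subset hs) hp hq hright
  · rintro ⟨hL, hR⟩
    refine ⟨_, fun s hs => abs_le_of_boundedByRowAbove (hg.1.subset hs)
      (boundedByRowAbove_of_eq (hg.1.subset hs) (fun i j h₁ h₂ h₃ h₄ => ?_)
        (fun i j h₁ h₂ h₃ h₄ => ?_))⟩
    · exact (deltaGraph_adj_iff h₁ h₂ (hdiag i j)).1 (hL i j h₁ h₂ h₃ h₄) s hs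
    · exact (deltaGraph_adj_iff h₁ h₂ (hvert i j)).1 (hR i j h₁ h₂ h₃ h₄) s hs
end
end

section
/- A point v of the infinite-dimensional polyhedron Π is a vertex (minimal face) of Π if and only if for every integer i at least one of the equalities v_i = 0 or χ_i(v) = k holds, where χ_i(v) = v_{i-n+1} + ... + v_i. -/
/-!
If `v_{i₀} > 0` and `χ_{i₀}(v) < k`, there is a finitely supported direction `d` with
`d_{i₀} = -1` along which every constraint tight at `v` stays tight: to the right of `i₀`,
`d_i` is forced to cancel the window sum wherever `χ_i(v) = k`, and a tight window ending at a
zero coordinate `v_i = 0` forces `v_{i-n} = 0` and `χ_{i-1}(v) = k`, which makes `d_i = 0` too.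
Moving from `v` along `d` until a new constraint becomes tight stays in every face containing
`v` and cuts out a strictly smaller face, so `v` lies in no minimal face.
Conversely, if every constraint is tight at `v`, the smallest face containing `v` is `{v}`:
at the first index `i` where another point `x` of it differs from `v`, either `x_i = 0 = v_i`,
or `χ_i(x) = k = χ_i(v)` while all earlier coordinates agree, so again `x_i = v_i`.
-/

open scoped BigOperators

noncomputable section

/-- The window sum `χ_i(x) = x_{i-n+1} + ... + x_i`. -/
def chiW (n : ℕ) (x : ℤ → ℝ) (i : ℤ) : ℝ := ∑ l ∈ Finset.Icc (i - n + 1) i, x l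

/-- The level `k = a_0 + ... + a_{n-1}`. -/
def klev (n : ℕ) (a : ℤ → ℤ) : ℤ := ∑ l ∈ Finset.Icc (0 : ℤ) ((n : ℤ) - 1), a l

/-- The affine space `V` of real sequences vanishing far to the right and equal to the
(`n`-periodic) sequence `a` far to the left. -/
def Vspace (n : ℕ) (a : ℤ → ℤ) : Set (ℤ → ℝ) :=
  {x | (∃ N : ℤ, ∀ i, N ≤ i → x i = 0) ∧ (∃ N : ℤ, ∀ i, i ≤ N → x i = (a i : ℝ))}

/-- The infinite-dimensional polyhedron `Π ⊂ V`, cut out by the inequalities `x_i ≥ 0`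
and `χ_i(x) ≤ k` for all `i ∈ ℤ`. -/
def PiPoly (n : ℕ) (a : ℤ → ℤ) : Set (ℤ → ℝ) :=
  {x | x ∈ Vspace n a ∧ (∀ i, 0 ≤ x i) ∧ ∀ i, chiW n x i ≤ (klev n a : ℝ)}

/-- A face of `Π`: a nonempty intersection of `Π` with some collection of the
hyperplanes `E_i = {x_i = 0}` and `H_i = {χ_i(x) = k}`. -/
def IsFacePi (n : ℕ) (a : ℤ → ℤ) (f : Set (ℤ → ℝ)) : Prop :=
  f.Nonempty ∧ ∃ S T : Set ℤ,
    f = PiPoly n a ∩ (⋂ i ∈ S, {x | x i = 0}) ∩ (⋂ i ∈ T, {x | chiW n x i = (klev n a : ℝ)})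


theorem chiW_add_apply_sub (n : ℕ) (x : ℤ → ℝ) (i : ℤ) :
    chiW n x i + x (i - n) = chiW n x (i - 1) + x i := by
  rcases Nat.eq_zero_or_pos n with rfl | hn
  · simp [chiW]
  have hIcc : Finset.Icc (i - n) i = insert (i - n) (Finset.Icc (i - n + 1) i) := by
    rw [Finset.Icc_add_one_left_eq_Ioc, Finset.Ioc_insert_left (by omega)]
  have hIcc' : Finset.Icc (i - n) i = insert i (Finset.Icc (i - 1 - n + 1) (i - 1)) := by
    rw [show i - 1 - n + 1 = i - n by ring, Finset.Icc_sub_one_right_eq_Ico,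
      Finset.Ico_insert_right (by omega)]
  have h := congrArg (∑ l ∈ ·, x l) (hIcc.symm.trans hIcc')
  simp only [Finset.sum_insert (by simp : i - n ∉ Finset.Icc (i - n + 1) i),
    Finset.sum_insert (by simp : i ∉ Finset.Icc (i - 1 - n + 1) (i - 1))] at h
  simp only [chiW]
  linarith

theorem chiW_congr {n : ℕ} {x y : ℤ → ℝ} {i : ℤ} (h : ∀ l ≤ i, x l = y l) :
    chiW n x i = chiW n y i :=
  Finset.sum_congr rfl fun l hl => h l (Finset.mem_Icc.1 hl).2

theorem chiW_add_smul (n : ℕ) (x d : ℤ → ℝ) (t : ℝ) (i : ℤ) :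
    chiW n (x + t • d) i = chiW n x i + t * chiW n d i := by
  simp [chiW, Finset.sum_add_distrib, Finset.mul_sum]

theorem finite_support_chiW (n : ℕ) {d : ℤ → ℝ} (hd : (Function.support d).Finite) :
    (Function.support (chiW n d)).Finite := by
  refine (hd.biUnion fun l _ => Set.finite_Icc l (l + n - 1)).subset fun j hj => ?_
  obtain ⟨l, hl, hdl⟩ := Finset.exists_ne_zero_of_sum_ne_zero hj
  rw [Finset.mem_Icc] at hl
  exact Set.mem_biUnion hdl (Set.mem_Icc.2 ⟨hl.2, by omega⟩)

theorem exists_maximal_step {ι : Type*} {p q : ι → ℝ} (hp : ∀ j, 0 ≤ p j)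
    (hq : {j | q j < 0}.Finite) (hne : ∃ j, q j < 0) :
    ∃ t, (∀ j, 0 ≤ p j + t * q j) ∧ ∃ j, q j < 0 ∧ p j + t * q j = 0 := by
  obtain ⟨j₀, hj₀ : q j₀ < 0, hmin⟩ := Set.exists_min_image _ (fun j => p j / -q j) hq hne
  have hj₀' : 0 < -q j₀ := neg_pos.2 hj₀
  refine ⟨p j₀ / -q j₀, fun j => ?_, j₀, hj₀, by field_simp [hj₀.ne]; ring⟩
  rcases lt_or_ge (q j) 0 with hj | hj
  · have := hmin j hj
    rw [le_div_iff₀ (neg_pos.2 hj)] at this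
    linarith
  · exact add_nonneg (hp j) (mul_nonneg (div_nonneg (hp j₀) hj₀'.le) hj)

open Classical in
def tightDir (n : ℕ) (Z : ℤ → Prop) (i₀ i : ℤ) : ℝ :=
  if i < i₀ then 0
  else if i = i₀ then -1
  else if Z i then -∑ l ∈ (Finset.Ico (i - n + 1) i).attach, tightDir n Z i₀ l
  else 0
termination_by (i - i₀).toNat
decreasing_by
  have hl := Finset.mem_Ico.1 l.2
  omega

section tightDir

variable {n : ℕ} {Z : ℤ → Prop} {i₀ i : ℤ}

theorem tightDir_of_lt (h : i < i₀) : tightDir n Z i₀ i = 0 := by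
  rw [tightDir]; simp [h]

theorem tightDir_self : tightDir n Z i₀ i₀ = -1 := by
  rw [tightDir]; simp

theorem tightDir_of_not (h : i₀ < i) (hZ : ¬ Z i) : tightDir n Z i₀ i = 0 := by
  rw [tightDir]; simp [not_lt.2 h.le, h.ne', hZ]

theorem chiW_tightDir (hn : 1 ≤ n) (h : i₀ < i) (hZ : Z i) :
    chiW n (tightDir n Z i₀) i = 0 := by
  rw [chiW, ← Finset.Ico_insert_right (by omega), Finset.sum_insert (by simp), tightDir]
  simp [not_lt.2 h.le, h.ne', hZ, Finset.sum_attach]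

theorem chiW_tightDir_of_lt (h : i < i₀) : chiW n (tightDir n Z i₀) i = 0 :=
  Finset.sum_eq_zero fun l hl => tightDir_of_lt (by rw [Finset.mem_Icc] at hl; omega)

end tightDir

theorem chiW_sub_one_eq_of_eq_zero {n : ℕ} {K : ℝ} {v : ℤ → ℝ} (hnn : ∀ i, 0 ≤ v i)
    (hle : ∀ i, chiW n v i ≤ K) {i : ℤ} (h0 : v i = 0) (h1 : chiW n v i = K) :
    chiW n v (i - 1) = K ∧ v (i - n) = 0 := by
  have h := chiW_add_apply_sub n v i
  have := hle (i - 1)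
  have := hnn (i - n)
  constructor <;> linarith

theorem tightDir_eq_zero_of_eq_zero {n : ℕ} {K : ℝ} {v : ℤ → ℝ} (hn : 1 ≤ n)
    (hnn : ∀ i, 0 ≤ v i) (hle : ∀ i, chiW n v i ≤ K) {i₀ : ℤ} (h0 : v i₀ ≠ 0)
    (h1 : chiW n v i₀ ≠ K) (i : ℤ) (hi : v i = 0) :
    tightDir n (fun j => chiW n v j = K) i₀ i = 0 := by
  induction hm : (i - i₀).toNat using Nat.strong_induction_on generalizing i with
  | _ m ih =>
    rcases lt_trichotomy i i₀ with h | rfl | h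
    · exact tightDir_of_lt h
    · exact absurd hi h0
    by_cases hZ : chiW n v i = K
    swap
    · exact tightDir_of_not h hZ
    obtain ⟨hprev, hback⟩ := chiW_sub_one_eq_of_eq_zero hnn hle hi hZ
    have hi₁ : i₀ < i - 1 := lt_of_le_of_ne (by omega) fun he => h1 (he ▸ hprev)
    have hd_prev := chiW_tightDir (Z := fun j => chiW n v j = K) hn hi₁ hprev
    have hd_back := ih _ (by omega) (i - n) hback rfl
    have hd_cur := chiW_tightDir (Z := fun j => chiW n v j = K) hn h hZ
    linarith [chiW_add_apply_sub n (tightDir n (fun j => chiW n v j = K) i₀) i]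

theorem exists_direction {n : ℕ} {a : ℤ → ℤ} {v : ℤ → ℝ} (hn : 1 ≤ n) (hv : v ∈ PiPoly n a)
    {i₀ : ℤ} (h0 : v i₀ ≠ 0) (h1 : chiW n v i₀ ≠ klev n a) :
    ∃ d : ℤ → ℝ, d i₀ = -1 ∧ (Function.support d).Finite ∧ (∀ i, v i = 0 → d i = 0) ∧
      ∀ j, chiW n v j = klev n a → chiW n d j = 0 := by
  obtain ⟨⟨N, hN⟩, -⟩ := hv.1
  have hzero := tightDir_eq_zero_of_eq_zero hn hv.2.1 hv.2.2 h0 h1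
  refine ⟨_, tightDir_self, (Set.finite_Ico i₀ N).subset fun i hi => ?_, hzero, fun j hj => ?_⟩
  · by_contra hIco
    rcases lt_or_ge i i₀ with h | h
    · exact hi (tightDir_of_lt h)
    · exact hi (hzero i (hN i (by rw [Set.mem_Ico] at hIco; omega)))
  · rcases lt_trichotomy j i₀ with h | rfl | h
    · exact chiW_tightDir_of_lt h
    · exact absurd hj h1
    · exact chiW_tightDir hn h hj

theorem add_smul_mem_Vspace {n : ℕ} {a : ℤ → ℤ} {v d : ℤ → ℝ} (hv : v ∈ Vspace n a)
    (hd : (Function.support d).Finite) (t : ℝ) : v + t • d ∈ Vspace n a := by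
  obtain ⟨⟨N, hN⟩, ⟨M, hM⟩⟩ := hv
  obtain ⟨B, hB⟩ := hd.bddAbove
  obtain ⟨B', hB'⟩ := hd.bddBelow
  have hdB : ∀ i, (i < B' ∨ B < i) → d i = 0 := fun i hi =>
    Function.notMem_support.1 fun hsupp => by
      have := hB hsupp
      have := hB' hsupp
      omega
  refine ⟨⟨max N (B + 1), fun i hi => ?_⟩, ⟨min M (B' - 1), fun i hi => ?_⟩⟩
  · simp [hN i (le_of_max_le_left hi), hdB i (by omega)]
  · simp [hM i (le_of_le_min_left hi), hdB i (by omega)]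

/-- The smallest face of `Π` containing `v`. -/
def faceOf (n : ℕ) (a : ℤ → ℤ) (v : ℤ → ℝ) : Set (ℤ → ℝ) :=
  PiPoly n a ∩ (⋂ i ∈ {i | v i = 0}, {x | x i = 0}) ∩
    (⋂ i ∈ {i | chiW n v i = klev n a}, {x | chiW n x i = (klev n a : ℝ)})

section faceOf

variable {n : ℕ} {a : ℤ → ℤ} {f : Set (ℤ → ℝ)} {v x : ℤ → ℝ}

theorem mem_faceOf : x ∈ faceOf n a v ↔ x ∈ PiPoly n a ∧ (∀ i, v i = 0 → x i = 0) ∧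
    ∀ i, chiW n v i = klev n a → chiW n x i = klev n a := by
  simp only [faceOf, Set.mem_inter_iff, Set.mem_iInter, Set.mem_ofPred_eq, and_assoc]

theorem self_mem_faceOf (hv : v ∈ PiPoly n a) : v ∈ faceOf n a v :=
  mem_faceOf.2 ⟨hv, fun _ => id, fun _ => id⟩

theorem isFacePi_faceOf (hv : v ∈ PiPoly n a) : IsFacePi n a (faceOf n a v) :=
  ⟨⟨v, self_mem_faceOf hv⟩, _, _, rfl⟩

theorem IsFacePi.faceOf_subset (hf : IsFacePi n a f) (hvf : v ∈ f) : faceOf n a v ⊆ f := by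
  obtain ⟨-, S, T, rfl⟩ := hf
  simp only [Set.mem_inter_iff, Set.mem_iInter, Set.mem_ofPred_eq] at hvf
  intro x hx
  obtain ⟨hx, hx0, hxk⟩ := mem_faceOf.1 hx
  simp only [Set.mem_inter_iff, Set.mem_iInter, Set.mem_ofPred_eq]
  exact ⟨⟨hx, fun i hi => hx0 i (hvf.1.2 i hi)⟩, fun j hj => hxk j (hvf.2 j hj)⟩

theorem IsFacePi.inter_coord (hf : IsFacePi n a f) (i : ℤ)
    (hne : (f ∩ {x | x i = 0}).Nonempty) : IsFacePi n a (f ∩ {x | x i = 0}) := by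
  obtain ⟨-, S, T, rfl⟩ := hf
  refine ⟨hne, insert i S, T, ?_⟩
  rw [Set.biInter_insert]
  ac_rfl

theorem IsFacePi.inter_window (hf : IsFacePi n a f) (j : ℤ)
    (hne : (f ∩ {x | chiW n x j = klev n a}).Nonempty) :
    IsFacePi n a (f ∩ {x | chiW n x j = klev n a}) := by
  obtain ⟨-, S, T, rfl⟩ := hf
  refine ⟨hne, S, insert j T, ?_⟩
  rw [Set.biInter_insert]
  ac_rfl

end faceOf

section minimal

variable {n : ℕ} {a : ℤ → ℤ} {f : Set (ℤ → ℝ)} {v y : ℤ → ℝ}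

theorem IsFacePi.eq_zero_of_minimal (hf : IsFacePi n a f)
    (hmin : ∀ g, IsFacePi n a g → g ⊆ f → g = f) (hv : v ∈ f) (hy : y ∈ f) {i : ℤ}
    (hyi : y i = 0) : v i = 0 := by
  have hg := hmin _ (hf.inter_coord i ⟨y, hy, hyi⟩) Set.inter_subset_left
  exact (hg.symm ▸ hv : v ∈ f ∩ {x | x i = 0}).2

theorem IsFacePi.chiW_eq_of_minimal (hf : IsFacePi n a f)
    (hmin : ∀ g, IsFacePi n a g → g ⊆ f → g = f) (hv : v ∈ f) (hy : y ∈ f) {j : ℤ}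
    (hyj : chiW n y j = klev n a) : chiW n v j = klev n a := by
  have hg := hmin _ (hf.inter_window j ⟨y, hy, hyj⟩) Set.inter_subset_left
  exact (hg.symm ▸ hv : v ∈ f ∩ {x | chiW n x j = klev n a}).2

end minimal

theorem add_smul_mem_faceOf {n : ℕ} {a : ℤ → ℤ} {v d : ℤ → ℝ} {t : ℝ} (hv : v ∈ PiPoly n a)
    (hd : (Function.support d).Finite) (hd0 : ∀ i, v i = 0 → d i = 0)
    (hdk : ∀ j, chiW n v j = klev n a → chiW n d j = 0) (hnn : ∀ i, 0 ≤ v i + t * d i)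
    (hle : ∀ j, chiW n v j + t * chiW n d j ≤ klev n a) : v + t • d ∈ faceOf n a v := by
  refine mem_faceOf.2 ⟨⟨add_smul_mem_Vspace hv.1 hd t, hnn, fun j => ?_⟩, fun i hi => ?_,
    fun j hj => ?_⟩
  · simpa only [chiW_add_smul] using hle j
  · simp [hi, hd0 i hi]
  · simp [chiW_add_smul, hj, hdk j hj]

theorem exists_mem_faceOf_tight {n : ℕ} {a : ℤ → ℤ} {v : ℤ → ℝ} (hn : 1 ≤ n)
    (hv : v ∈ PiPoly n a) {i₀ : ℤ} (h0 : v i₀ ≠ 0) (h1 : chiW n v i₀ ≠ klev n a) :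
    ∃ y ∈ faceOf n a v, (∃ i, v i ≠ 0 ∧ y i = 0) ∨
      ∃ j, chiW n v j ≠ klev n a ∧ chiW n y j = klev n a := by
  obtain ⟨d, hdi₀, hd, hd0, hdk⟩ := exists_direction hn hv h0 h1
  -- one family of constraints `0 ≤ p + t q`: the coordinates on the left, the windows on the right
  set p : ℤ ⊕ ℤ → ℝ := Sum.elim v fun j => klev n a - chiW n v j
  set q : ℤ ⊕ ℤ → ℝ := Sum.elim d fun j => -chiW n d j
  have hp : ∀ j, 0 ≤ p j := by
    rintro (i | j)
    · exact hv.2.1 i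
    · exact sub_nonneg.2 (hv.2.2 j)
  have hq : {j | q j < 0}.Finite := by
    refine ((hd.image Sum.inl).union ((finite_support_chiW n hd).image Sum.inr)).subset ?_
    rintro (i | j) hj <;> simp only [Set.mem_ofPred_eq, q, Sum.elim_inl, Sum.elim_inr] at hj
    · exact .inl ⟨i, hj.ne, rfl⟩
    · exact .inr ⟨j, (neg_neg_iff_pos.1 hj).ne', rfl⟩
  obtain ⟨t, hpq, j, hqj, hpqj⟩ := exists_maximal_step hp hq ⟨.inl i₀, by simp [q, hdi₀]⟩
  have hwin : ∀ j, chiW n v j + t * chiW n d j ≤ klev n a := fun j => by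
    have := hpq (.inr j)
    simp only [p, q, Sum.elim_inr] at this
    linarith
  refine ⟨v + t • d, add_smul_mem_faceOf hv hd hd0 hdk (fun i => hpq (.inl i)) hwin, ?_⟩
  rcases j with i | j <;> simp only [p, q, Sum.elim_inl, Sum.elim_inr] at hqj hpqj
  · exact .inl ⟨i, fun hi => hqj.ne (hd0 i hi), by simpa using hpqj⟩
  · refine .inr ⟨j, fun hj => hqj.ne' (by simp [hdk j hj]), ?_⟩
    simp only [chiW_add_smul]
    linarith

theorem faceOf_eq_singleton {n : ℕ} {a : ℤ → ℤ} {v : ℤ → ℝ} (hn : 1 ≤ n)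
    (hv : v ∈ PiPoly n a) (hall : ∀ i, v i = 0 ∨ chiW n v i = klev n a) :
    faceOf n a v = {v} := by
  refine Set.eq_singleton_iff_unique_mem.2 ⟨self_mem_faceOf hv, fun x hx => ?_⟩
  obtain ⟨hxPi, hx0, hxk⟩ := mem_faceOf.1 hx
  by_contra hne
  obtain ⟨Mx, hMx⟩ := hxPi.1.2
  obtain ⟨Mv, hMv⟩ := hv.1.2
  have hbdd : ∀ z, x z ≠ v z → min Mx Mv < z := fun z hz => by
    by_contra! h
    exact hz (by rw [hMx z (by omega), hMv z (by omega)])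
  obtain ⟨m, hm, hmin⟩ := Int.exists_least_of_bdd ⟨_, fun z hz => (hbdd z hz).le⟩
    (Function.ne_iff.1 hne)
  have hbelow : ∀ l < m, x l = v l := fun l hl => not_not.1 fun h => (hmin l h).not_gt hl
  rcases hall m with h | h
  · exact hm (by rw [hx0 m h, h])
  · have hx := chiW_add_apply_sub n x m
    have hv' := chiW_add_apply_sub n v m
    rw [hxk m h, hbelow (m - n) (by omega),
      chiW_congr (y := v) fun l hl => hbelow l (by omega)] at hx
    rw [h] at hv'
    exact hm (by linarith)

theorem stmt17_general (n : ℕ) (hn : 2 ≤ n) (a : ℤ → ℤ)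
    (v : ℤ → ℝ) (hv : v ∈ PiPoly n a) :
    (∃ f, IsFacePi n a f ∧ v ∈ f ∧ ∀ g, IsFacePi n a g → g ⊆ f → g = f) ↔
      ∀ i : ℤ, v i = 0 ∨ chiW n v i = (klev n a : ℝ) := by
  have hn1 : 1 ≤ n := by omega
  constructor
  · rintro ⟨f, hf, hvf, hmin⟩ i
    by_contra! hi
    obtain ⟨y, hy, ⟨j, hvj, hyj⟩ | ⟨j, hvj, hyj⟩⟩ := exists_mem_faceOf_tight hn1 hv hi.1 hi.2
    · exact hvj (hf.eq_zero_of_minimal hmin hvf (hf.faceOf_subset hvf hy) hyj)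
    · exact hvj (hf.chiW_eq_of_minimal hmin hvf (hf.faceOf_subset hvf hy) hyj)
  · intro hall
    refine ⟨faceOf n a v, isFacePi_faceOf hv, self_mem_faceOf hv, fun g hg hgf => ?_⟩
    rw [faceOf_eq_singleton hn1 hv hall] at hgf ⊢
    exact hg.1.subset_singleton_iff.1 hgf

/-- A point `v ∈ Π` is a vertex of `Π` (i.e. belongs to a minimal element of the face
lattice of `Π`) if and only if for every integer `i` at least one of the equalities
`v_i = 0` or `χ_i(v) = k` holds. -/
theorem stmt17 (n : ℕ) (hn : 2 ≤ n) (a : ℤ → ℤ)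
    (hper : ∀ i, a (i + n) = a i) (hpos : ∀ i, 0 ≤ a i)
    (v : ℤ → ℝ) (hv : v ∈ PiPoly n a) :
    (∃ f, IsFacePi n a f ∧ v ∈ f ∧ ∀ g, IsFacePi n a g → g ⊆ f → g = f) ↔
      ∀ i : ℤ, v i = 0 ∨ chiW n v i = (klev n a : ℝ) :=
  stmt17_general n hn a v hv
end
end

section
/- For any vertex v of Π (λ ≠ 0), the graph Δ_v has exactly m(λ) connected components Γ_1,...,Γ_{m(λ)}, and they can be labeled so that for all sufficiently small i (i ≪ 0) the component Γ_r contains exactly l_r vertices in row i, where l_1,...,l_{m(λ)} are the sizes of the path components of the subgraph of the n-cycle in which vertices i and i+1 are joined exactly when a_{(i+1) mod n} = 0. -/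
open scoped BigOperators

noncomputable section

/-- The reference sequence `T^m` (real valued): `0` for `i > mn`, `a_i` otherwise. -/
def TseqR (n : ℕ) (a : ℤ → ℤ) (m i : ℤ) : ℝ :=
  if (m * n : ℤ) < i then 0 else (a i : ℝ)

/-- The plane-filling GT-pattern coordinate `s_{i,j}(x)` of a point `x ∈ V`. -/
def sPatR (n : ℕ) (a : ℤ → ℤ) (x : ℤ → ℝ) (p : ℤ × ℤ) : ℝ :=
  (∑ᶠ l : ℤ, if l ≤ p.1 * n + p.2 * ((n : ℤ) - 1) then x l - TseqR n a (p.1 + p.2) l else 0)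
    - ∑ l ∈ Finset.Icc (p.1 * n + p.2 * ((n : ℤ) - 1) + 1) ((p.1 + p.2) * n),
        TseqR n a (p.1 + p.2) l

/-- The equality graph `Θ(x)`: lattice-adjacent indices are joined iff the corresponding
coordinates of the plane-filling GT-pattern of `x` agree. -/
def ThetaGraph (n : ℕ) (a : ℤ → ℤ) (x : ℤ → ℝ) : SimpleGraph (ℤ × ℤ) :=
  SimpleGraph.fromRel fun p q => LatAdj p q ∧ sPatR n a x p = sPatR n a x q

/-- The shift `(i,j) ↦ (i-n+1, j+n)`. -/
def shiftPt (n : ℕ) (p : ℤ × ℤ) : ℤ × ℤ := (p.1 - (n - 1), p.2 + n)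

/-- The relation on connected components of a graph on `ℤ × ℤ` identifying a component
with its image under the shift `(i,j) ↦ (i-n+1, j+n)`. -/
def shiftRel (n : ℕ) (G : SimpleGraph (ℤ × ℤ)) :
    G.ConnectedComponent → G.ConnectedComponent → Prop :=
  fun c c' => {p | G.connectedComponentMk p = c'} =
    shiftPt n '' {p | G.connectedComponentMk p = c}

/-- The subgraph of the `n`-cycle associated to `λ`: vertices `i` and `i+1` of `ZMod n`
are joined exactly when `a_{(i+1) mod n} = 0`. -/
def cycG (n : ℕ) (a : ℤ → ℤ) : SimpleGraph (ZMod n) :=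
  SimpleGraph.fromRel fun r s => s = r + 1 ∧ a ((s.val : ℤ)) = 0

/-- `v` is a vertex of `Π`: it belongs to a minimal element of the face lattice. -/
def IsVertexPi (n : ℕ) (a : ℤ → ℤ) (v : ℤ → ℝ) : Prop :=
  ∃ f, IsFacePi n a f ∧ v ∈ f ∧ ∀ g, IsFacePi n a g → g ⊆ f → g = f


/-!
In the coordinates `M = i n + j (n - 1)`, `m = i + j` one has `s_{i,j}(v) = h(M) - m k`, where `h`
is a partial-sum function of `v` with `h(M) - h(M - 1) = v_M`. Hence `Θ(v)` joins `(M, m)` to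
`(M - 1, m)` when `v_M = 0` and to `(M - n, m - 1)` when `χ_M(v) = k`, and the shift is
`m ↦ m + 1`. Far to the left `v = a`, so there the first edges exist exactly when `a_M = 0` and the
second ones always: the shift classes of far-left components then correspond to the components of
the cycle subgraph through `M mod n`, and since `s` is constant on a component, a component meets
each row far down exactly once in each residue class of its cycle component.

Every component does reach the far left. Otherwise the cut indices `M` of its points form a set that
is bounded below and closed under both kinds of edges; lowering `s` by a small `δ` on that set gives
a point of `Π` satisfying all constraints tight at `v`, and the largest admissible `δ` makes one
more constraint tight, contradicting minimality of the face of the vertex `v`.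
-/

open Finset

section PrefixSum

variable {G : Type*} [AddCommGroup G]

theorem Finset.sum_Ioc_add_sum_Ioc_s18 {α : Type*} [LinearOrder α] [LocallyFiniteOrder α]
    {f : α → G} {x y z : α} (hxy : x ≤ y) (hyz : y ≤ z) :
    ∑ l ∈ Ioc x y, f l + ∑ l ∈ Ioc y z, f l = ∑ l ∈ Ioc x z, f l := by
  rw [← Ioc_union_Ioc_eq_Ioc hxy hyz, sum_union (Ioc_disjoint_Ioc_of_le le_rfl)]

/-- `prefixSum f M` is `f 1 + ⋯ + f M` for `M ≥ 0` and `-(f (M+1) + ⋯ + f 0)` for `M < 0`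
(one of the two sums is always empty). -/
def prefixSum (f : ℤ → G) (M : ℤ) : G := ∑ l ∈ Ioc 0 M, f l - ∑ l ∈ Ioc M 0, f l

theorem prefixSum_sub_prefixSum (f : ℤ → G) {x y : ℤ} (hxy : x ≤ y) :
    prefixSum f y - prefixSum f x = ∑ l ∈ Ioc x y, f l := by
  unfold prefixSum
  rcases le_total 0 x with hx | hx
  · rw [Ioc_eq_empty_of_le hx, Ioc_eq_empty_of_le (hx.trans hxy),
      ← sum_Ioc_add_sum_Ioc_s18 hx hxy]
    abel
  rcases le_total y 0 with hy | hy
  · rw [Ioc_eq_empty_of_le hy, Ioc_eq_empty_of_le (hxy.trans hy),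
      ← sum_Ioc_add_sum_Ioc_s18 hxy hy]
    abel
  · rw [Ioc_eq_empty_of_le hx, Ioc_eq_empty_of_le hy, ← sum_Ioc_add_sum_Ioc_s18 hx hy, sum_empty]
    abel

theorem sum_Ioc_sub_sub_one (g : ℤ → G) {x y : ℤ} (hxy : x ≤ y) :
    ∑ l ∈ Ioc x y, (g l - g (l - 1)) = g y - g x := by
  induction y, hxy using Int.leInduction with
  | base => simp
  | succ y hxy ih =>
    rw [← insert_Ioc_right_eq_Ioc_add_one hxy, sum_insert (by simp), ih, add_sub_cancel_right]
    abel

theorem prefixSum_add_one (f : ℤ → G) (M : ℤ) :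
    prefixSum f (M + 1) = prefixSum f M + f (M + 1) := by
  rw [← sub_eq_iff_eq_add', prefixSum_sub_prefixSum f (by omega),
    ← insert_Ioc_right_eq_Ioc_add_one le_rfl, Ioc_self, sum_insert (notMem_empty _), sum_empty,
    add_zero]

end PrefixSum

section Periodic

variable {n : ℕ} {a : ℤ → ℤ}

theorem sum_Ioc_add_period (hper : Function.Periodic a n) (M : ℤ) :
    ∑ l ∈ Ioc M (M + n), a l = klev n a := by
  set g : ℤ → ℤ := fun M => prefixSum a (M + n) - prefixSum a M
  have hg : Function.Periodic g 1 := fun M => by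
    simp only [g]
    rw [add_right_comm M 1, prefixSum_add_one, prefixSum_add_one, add_right_comm M (n : ℤ) 1, hper]
    ring
  have hg0 : g (-1) = klev n a := by
    simp only [g, klev]
    rw [prefixSum_sub_prefixSum a (by omega)]
    exact sum_congr (by ext; simp; omega) fun _ _ => rfl
  have hgM := hg.int_mul (M + 1) (-1)
  rw [Int.cast_id, mul_one, show -1 + (M + 1) = M by ring] at hgM
  rw [← prefixSum_sub_prefixSum a (by omega), ← hg0, ← hgM]

theorem prefixSum_add_period (hper : Function.Periodic a n) (M : ℤ) :
    prefixSum a (M + n) = prefixSum a M + klev n a := by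
  rw [← sum_Ioc_add_period hper M, ← prefixSum_sub_prefixSum a (by omega)]
  ring

theorem prefixSum_add_mul_period (hper : Function.Periodic a n) (M t : ℤ) :
    prefixSum a (M + t * n) = prefixSum a M + t * klev n a := by
  induction t using Int.induction_on generalizing M with
  | zero => simp
  | succ t ih => rw [add_mul, one_mul, ← add_assoc, prefixSum_add_period hper, ih]; ring
  | pred t ih =>
    have := prefixSum_add_period hper (M + (-t - 1) * n)
    rw [show M + (-(t : ℤ) - 1) * n + n = M + -t * n by ring, ih] at this
    linear_combination -this

theorem prefixSum_mul_period (hper : Function.Periodic a n) (m : ℤ) :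
    prefixSum a (m * n) = m * klev n a := by
  simpa [prefixSum] using prefixSum_add_mul_period hper 0 m

theorem apply_eq_apply_val [NeZero n] (hper : Function.Periodic a n) (M : ℤ) :
    a M = a ((M : ZMod n).val) := by
  have := hper.sub_int_mul_eq (x := M) (M / n)
  rw [Int.cast_id] at this
  rw [ZMod.val_intCast, Int.emod_def, mul_comm, this]

end Periodic

section Height

variable {n : ℕ} {a : ℤ → ℤ} {v : ℤ → ℝ} {N : ℤ}

/-- The partial sums of `v`, normalised to agree with those of `a` on the left of `N`. -/
def height (a : ℤ → ℤ) (v : ℤ → ℝ) (N M : ℤ) : ℝ :=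
  prefixSum v M - prefixSum (fun l => v l - a l) N

theorem height_sub_height {x y : ℤ} (hxy : x ≤ y) :
    height a v N y - height a v N x = ∑ l ∈ Ioc x y, v l := by
  rw [height, height, sub_sub_sub_cancel_right, prefixSum_sub_prefixSum v hxy]

theorem height_sub_height_sub_one (M : ℤ) : height a v N M - height a v N (M - 1) = v M := by
  have := prefixSum_add_one v (M - 1)
  rw [sub_add_cancel] at this
  rw [height, height, sub_sub_sub_cancel_right, this, add_sub_cancel_left]

theorem height_of_le (hN : ∀ i ≤ N, v i = a i) {M : ℤ} (hM : M ≤ N) :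
    height a v N M = prefixSum a M := by
  have hzero : ∑ l ∈ Ioc M N, (v l - a l) = 0 :=
    sum_eq_zero fun l hl => sub_eq_zero.2 (hN l (mem_Ioc.1 hl).2)
  rw [← prefixSum_sub_prefixSum _ hM, sub_eq_zero] at hzero
  rw [height, hzero]
  simp only [prefixSum, sum_sub_distrib, Int.cast_sum, Int.cast_sub]
  ring

theorem height_mono (hv : ∀ i, 0 ≤ v i) : Monotone (height a v N) := fun x y hxy => by
  rw [← sub_nonneg, height_sub_height hxy]
  exact sum_nonneg fun l _ => hv l

theorem chiW_eq_height_sub (M : ℤ) : chiW n v M = height a v N M - height a v N (M - n) := by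
  rw [height_sub_height (by omega), chiW, Icc_add_one_left_eq_Ioc]

theorem chiW_eq_klev_of_le (hper : Function.Periodic a n) (hN : ∀ i ≤ N, v i = a i) {M : ℤ}
    (hM : M ≤ N) : chiW n v M = klev n a := by
  rw [chiW_eq_height_sub (a := a) (N := N), height_of_le hN hM, height_of_le hN (by omega),
    ← sum_Ioc_add_period hper (M - n), ← prefixSum_sub_prefixSum a (by omega), sub_add_cancel]
  push_cast
  ring



theorem height_le_height (hv : ∀ i, 0 ≤ v i) {R : ℤ} (hR : ∀ i, R ≤ i → v i = 0) (M : ℤ) :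
    height a v N M ≤ height a v N R := by
  rcases le_total M R with hMR | hRM
  · exact height_mono hv hMR
  · rw [← sub_nonpos, height_sub_height hRM,
      sum_eq_zero fun l hl => hR l (mem_Ioc.1 hl).1.le]

end Height

section Coordinates

/-- `s_{i,j}` compares the partial sums of `x` and of `T^{levelOf (i, j)}` up to the index
`cutIdx n (i, j)`. The change of coordinates `p ↦ (cutIdx n p, levelOf p)` has determinant `1`;
`latticePt n` is its inverse. -/
def cutIdx (n : ℕ) (p : ℤ × ℤ) : ℤ := p.1 * n + p.2 * ((n : ℤ) - 1)

def levelOf (p : ℤ × ℤ) : ℤ := p.1 + p.2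

def latticePt (n : ℕ) (M m : ℤ) : ℤ × ℤ := (M - ((n : ℤ) - 1) * m, n * m - M)

variable {n : ℕ}

@[simp] theorem cutIdx_latticePt (M m : ℤ) : cutIdx n (latticePt n M m) = M := by
  simp only [cutIdx, latticePt]; ring

@[simp] theorem levelOf_latticePt (M m : ℤ) : levelOf (latticePt n M m) = m := by
  simp only [levelOf, latticePt]; ring

theorem latticePt_cutIdx_levelOf (p : ℤ × ℤ) : latticePt n (cutIdx n p) (levelOf p) = p := by
  simp only [cutIdx, levelOf, latticePt]; ext <;> ring

theorem latticePt_fst (M m : ℤ) : (latticePt n M m).1 = M - ((n : ℤ) - 1) * m := rfl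

end Coordinates

section Pattern

variable {n : ℕ} {a : ℤ → ℤ} {v : ℤ → ℝ} {N : ℤ}

theorem sum_Ioc_TseqR {L M m : ℤ} (hLM : L ≤ M) (hLm : L ≤ m * n) :
    ∑ l ∈ Ioc L M, TseqR n a m l + ∑ l ∈ Ioc M (m * n), TseqR n a m l
      = ∑ l ∈ Ioc L (m * n), (a l : ℝ) := by
  have hT : ∀ l ≤ m * n, TseqR n a m l = a l := fun l hl => if_neg (not_lt.2 hl)
  rcases le_total M (m * n) with hM | hM
  · rw [← sum_Ioc_add_sum_Ioc_s18 hLM hM]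
    congr 1 <;> exact sum_congr rfl fun l hl => hT l (by grind)
  · rw [Ioc_eq_empty_of_le hM, sum_empty, add_zero, ← sum_Ioc_add_sum_Ioc_s18 hLm hM,
      sum_congr rfl fun l hl => hT l (mem_Ioc.1 hl).2, add_eq_left]
    exact sum_eq_zero fun l hl => if_pos (mem_Ioc.1 hl).1

theorem sPatR_eq (hper : Function.Periodic a n) (hN : ∀ i ≤ N, v i = a i) (p : ℤ × ℤ) :
    sPatR n a v p = height a v N (cutIdx n p) - levelOf p * klev n a := by
  set M := cutIdx n p
  set m := levelOf p
  set L := min (min N (m * n)) M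
  have hLN : L ≤ N := (min_le_left _ _).trans (min_le_left _ _)
  have hLm : L ≤ m * n := (min_le_left _ _).trans (min_le_right _ _)
  have hLM : L ≤ M := min_le_right _ _
  set F : ℤ → ℝ := fun l => if l ≤ M then v l - TseqR n a m l else 0
  have hF : ∀ l ∈ Ioc L M, F l = v l - TseqR n a m l := fun l hl => if_pos (mem_Ioc.1 hl).2
  have hsupp : Function.support F ⊆ Ioc L M := by
    intro l hl
    rw [coe_Ioc, Set.mem_Ioc]
    by_contra hlL
    apply hl
    simp only [F]
    split_ifs with hlM
    · have hl' : l ≤ N ∧ l ≤ m * n := by omega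
      rw [TseqR, if_neg (not_lt.2 hl'.2), hN l hl'.1, sub_self]
    · rfl
  have hsum : sPatR n a v p = ∑ l ∈ Ioc L M, F l - ∑ l ∈ Ioc M (m * n), TseqR n a m l := by
    rw [← finsum_eq_sum_of_support_subset F hsupp, ← Icc_add_one_left_eq_Ioc]
    rfl
  rw [hsum, sum_congr rfl hF, sum_sub_distrib, sub_sub, sum_Ioc_TseqR hLM hLm,
    ← height_sub_height (a := a) (N := N) hLM, ← Int.cast_sum, ← prefixSum_sub_prefixSum a hLm,
    height_of_le hN hLN, prefixSum_mul_period hper]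
  push_cast
  ring

theorem sPatR_latticePt (hper : Function.Periodic a n) (hN : ∀ i ≤ N, v i = a i) (M m : ℤ) :
    sPatR n a v (latticePt n M m) = height a v N M - m * klev n a := by
  rw [sPatR_eq hper hN, cutIdx_latticePt, levelOf_latticePt]

theorem sPatR_latticePt_of_le (hper : Function.Periodic a n) (hN : ∀ i ≤ N, v i = a i)
    {M : ℤ} (hM : M ≤ N) (m : ℤ) :
    sPatR n a v (latticePt n M m) = (prefixSum a M - m * klev n a : ℤ) := by
  rw [sPatR_latticePt hper hN, height_of_le hN hM]
  push_cast
  ring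

end Pattern

section ThetaEdges

variable {n : ℕ} {a : ℤ → ℤ} {v : ℤ → ℝ} {N : ℤ}

theorem ThetaGraph.adj_of_latAdj {p q : ℤ × ℤ} (hpq : LatAdj p q)
    (hs : sPatR n a v p = sPatR n a v q) : (ThetaGraph n a v).Adj p q := by
  refine SimpleGraph.fromRel_adj _ p q |>.2 ⟨?_, .inl ⟨hpq, hs⟩⟩
  rintro rfl
  simp only [LatAdj, Prod.ext_iff] at hpq
  omega

theorem ThetaGraph.sPatR_eq_of_reachable {p q : ℤ × ℤ} (h : (ThetaGraph n a v).Reachable p q) :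
    sPatR n a v p = sPatR n a v q := by
  obtain ⟨w⟩ := h
  induction w with
  | nil => rfl
  | cons hadj _ ih =>
    rw [← ih]
    rcases (SimpleGraph.fromRel_adj _ _ _).1 hadj |>.2 with h | h
    exacts [h.2, h.2.symm]

theorem ThetaGraph.sPatR_eq_of_connectedComponentMk_eq {p q : ℤ × ℤ}
    (h : (ThetaGraph n a v).connectedComponentMk p = (ThetaGraph n a v).connectedComponentMk q) :
    sPatR n a v p = sPatR n a v q :=
  sPatR_eq_of_reachable (SimpleGraph.ConnectedComponent.exact h)

theorem ThetaGraph.adj_latticePt_sub_one (hper : Function.Periodic a n)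
    (hN : ∀ i ≤ N, v i = a i) {M : ℤ} (hM : v M = 0) (m : ℤ) :
    (ThetaGraph n a v).Adj (latticePt n M m) (latticePt n (M - 1) m) := by
  refine adj_of_latAdj (.inr (.inl ?_)) ?_
  · simp only [latticePt]; ext <;> ring
  · rw [sPatR_latticePt hper hN, sPatR_latticePt hper hN,
      ← sub_eq_zero.1 ((height_sub_height_sub_one (a := a) (N := N) M).trans hM)]

theorem ThetaGraph.adj_latticePt_sub (hper : Function.Periodic a n)
    (hN : ∀ i ≤ N, v i = a i) {M : ℤ} (hM : chiW n v M = klev n a) (m : ℤ) :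
    (ThetaGraph n a v).Adj (latticePt n M m) (latticePt n (M - n) (m - 1)) := by
  refine adj_of_latAdj (.inl ?_) ?_
  · simp only [latticePt]; ext <;> ring
  · rw [chiW_eq_height_sub (a := a) (N := N)] at hM
    rw [sPatR_latticePt hper hN, sPatR_latticePt hper hN]
    push_cast
    linear_combination hM

def shiftEquiv (n : ℕ) : ℤ × ℤ ≃ ℤ × ℤ :=
  (Equiv.subRight ((n : ℤ) - 1)).prodCongr (Equiv.addRight (n : ℤ))

theorem shiftEquiv_apply (p : ℤ × ℤ) : shiftEquiv n p = shiftPt n p := rfl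

theorem ThetaGraph.adj_shiftPt_iff (hper : Function.Periodic a n) (hN : ∀ i ≤ N, v i = a i)
    {p q : ℤ × ℤ} :
    (ThetaGraph n a v).Adj (shiftPt n p) (shiftPt n q) ↔ (ThetaGraph n a v).Adj p q := by
  have hs : ∀ p, sPatR n a v (shiftPt n p) = sPatR n a v p - klev n a := fun p => by
    rw [sPatR_eq hper hN, sPatR_eq hper hN,
      show cutIdx n (shiftPt n p) = cutIdx n p by simp only [cutIdx, shiftPt]; ring,
      show levelOf (shiftPt n p) = levelOf p + 1 by simp only [levelOf, shiftPt]; ring]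
    push_cast
    ring
  have hlat : ∀ p q, LatAdj (shiftPt n p) (shiftPt n q) ↔ LatAdj p q := fun p q => by
    simp only [LatAdj, shiftPt, Prod.ext_iff]
    omega
  rw [ThetaGraph, SimpleGraph.fromRel_adj, SimpleGraph.fromRel_adj, hs, hs, hlat, hlat,
    sub_left_inj, sub_left_inj, ← shiftEquiv_apply, ← shiftEquiv_apply,
    (shiftEquiv n).injective.ne_iff]

end ThetaEdges

section Vertex

variable {n : ℕ} {a : ℤ → ℤ}

def facePi (n : ℕ) (a : ℤ → ℤ) (S T : Set ℤ) : Set (ℤ → ℝ) :=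
  PiPoly n a ∩ (⋂ i ∈ S, {x | x i = 0}) ∩ (⋂ i ∈ T, {x | chiW n x i = (klev n a : ℝ)})

theorem mem_facePi {S T : Set ℤ} {x : ℤ → ℝ} :
    x ∈ facePi n a S T ↔
      x ∈ PiPoly n a ∧ (∀ i ∈ S, x i = 0) ∧ ∀ i ∈ T, chiW n x i = klev n a := by
  simp only [facePi, Set.mem_inter_iff, Set.mem_iInter₂, Set.mem_ofPred_eq, and_assoc]

theorem facePi_anti {S S' T T' : Set ℤ} (hS : S ⊆ S') (hT : T ⊆ T') :
    facePi n a S' T' ⊆ facePi n a S T := fun _ hx => by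
  rw [mem_facePi] at hx ⊢
  exact ⟨hx.1, fun i hi => hx.2.1 i (hS hi), fun i hi => hx.2.2 i (hT hi)⟩

/-- Otherwise the extra tight constraint would cut out a smaller face containing `w`. -/
theorem IsVertexPi.tight_of_tight {v w : ℤ → ℝ} (hvert : IsVertexPi n a v)
    (hw : w ∈ PiPoly n a) (hzero : ∀ i, v i = 0 → w i = 0)
    (hchi : ∀ i, chiW n v i = klev n a → chiW n w i = klev n a) :
    (∀ i, w i = 0 → v i = 0) ∧ ∀ i, chiW n w i = klev n a → chiW n v i = klev n a := by
  obtain ⟨f, ⟨-, S, T, rfl⟩, hvf, hmin⟩ := hvert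
  change v ∈ facePi n a S T at hvf
  have hwf : w ∈ facePi n a S T := mem_facePi.2
    ⟨hw, fun i hi => hzero i ((mem_facePi.1 hvf).2.1 i hi),
      fun i hi => hchi i ((mem_facePi.1 hvf).2.2 i hi)⟩
  have key : ∀ S' T', S ⊆ S' → T ⊆ T' → w ∈ facePi n a S' T' → v ∈ facePi n a S' T' :=
    fun S' T' hS hT hw' => by
      rwa [hmin (facePi n a S' T') ⟨⟨w, hw'⟩, S', T', rfl⟩ (facePi_anti hS hT)]
  refine ⟨fun i hi => ?_, fun i hi => ?_⟩
  · refine (mem_facePi.1 (key (insert i S) T (Set.subset_insert i S) le_rfl ?_)).2.1 i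
      (Set.mem_insert i S)
    refine mem_facePi.2 ⟨hw, fun j hj => ?_, (mem_facePi.1 hwf).2.2⟩
    rcases hj with rfl | hj
    exacts [hi, (mem_facePi.1 hwf).2.1 j hj]
  · refine (mem_facePi.1 (key S (insert i T) le_rfl (Set.subset_insert i T) ?_)).2.2 i
      (Set.mem_insert i T)
    refine mem_facePi.2 ⟨hw, (mem_facePi.1 hwf).2.1, fun j hj => ?_⟩
    rcases hj with rfl | hj
    exacts [hi, (mem_facePi.1 hwf).2.2 j hj]

end Vertex

section Perturbation

variable {n : ℕ} {a : ℤ → ℤ} {v : ℤ → ℝ} {P : Set ℤ} {δ : ℝ}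

/-- In GT-pattern terms, this lowers by `δ` every `s_{i,j}` with `i n + j (n - 1) ∈ P`. -/
def perturb (P : Set ℤ) (δ : ℝ) (v : ℤ → ℝ) (j : ℤ) : ℝ :=
  v j - δ * (P.indicator 1 j - P.indicator 1 (j - 1))

theorem perturb_of_iff {j : ℤ} (h : j - 1 ∈ P ↔ j ∈ P) : perturb P δ v j = v j := by
  by_cases hj : j ∈ P
  · simp [perturb, hj, h.2 hj]
  · simp [perturb, hj, mt h.1 hj]

theorem perturb_of_mem_of_notMem {j : ℤ} (hj : j ∈ P) (hj' : j - 1 ∉ P) :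
    perturb P δ v j = v j - δ := by
  simp [perturb, hj, hj']

theorem chiW_perturb (i : ℤ) :
    chiW n (perturb P δ v) i = chiW n v i - δ * (P.indicator 1 i - P.indicator 1 (i - n)) := by
  simp only [chiW, perturb, sum_sub_distrib, ← mul_sum, Icc_add_one_left_eq_Ioc,
    sum_Ioc_sub_sub_one _ (show i - n ≤ i by omega)]

theorem chiW_perturb_of_iff {i : ℤ} (h : i - n ∈ P ↔ i ∈ P) :
    chiW n (perturb P δ v) i = chiW n v i := by
  by_cases hi : i ∈ P
  · simp [chiW_perturb, hi, h.2 hi]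
  · simp [chiW_perturb, hi, mt h.1 hi]

theorem chiW_perturb_of_notMem_of_mem {i : ℤ} (hi : i ∉ P) (hi' : i - n ∈ P) :
    chiW n (perturb P δ v) i = chiW n v i + δ := by
  simp [chiW_perturb, hi, hi']

theorem perturb_mem_PiPoly (hv : v ∈ PiPoly n a) (hbdd : BddBelow P)
    (hE : ∀ j, v j = 0 → (j - 1 ∈ P ↔ j ∈ P)) (hδ : 0 ≤ δ)
    (hδE : ∀ j ∈ P, j - 1 ∉ P → δ ≤ v j)
    (hδH : ∀ j ∉ P, j - n ∈ P → δ ≤ klev n a - chiW n v j) :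
    perturb P δ v ∈ PiPoly n a := by
  obtain ⟨⟨⟨Nr, hNr⟩, ⟨Nl, hNl⟩⟩, hv0, hvk⟩ := hv
  obtain ⟨b, hb⟩ := hbdd
  have hleft : ∀ j < b, j ∉ P := fun j hj hjP => (hb hjP).not_gt hj
  refine ⟨⟨⟨Nr, fun j hj => ?_⟩, ⟨min Nl (b - 1), fun j hj => ?_⟩⟩, fun j => ?_, fun i => ?_⟩
  · rw [perturb_of_iff (hE j (hNr j hj)), hNr j hj]
  · rw [perturb_of_iff (iff_of_false (hleft _ (by omega)) (hleft _ (by omega))),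
      hNl j (hj.trans (min_le_left _ _))]
  · by_cases h : j - 1 ∈ P ↔ j ∈ P
    · rw [perturb_of_iff h]
      exact hv0 j
    by_cases hj : j ∈ P
    · rw [perturb_of_mem_of_notMem hj (by tauto)]
      linarith [hδE j hj (by tauto)]
    · simp only [perturb, Set.indicator_of_notMem hj,
        Set.indicator_of_mem (by tauto : j - 1 ∈ P), Pi.one_apply]
      linarith [hv0 j]
  · by_cases h : i - n ∈ P ↔ i ∈ P
    · rw [chiW_perturb_of_iff h]
      exact hvk i
    by_cases hi : i ∈ P
    · simp only [chiW_perturb, Set.indicator_of_mem hi,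
        Set.indicator_of_notMem (by tauto : i - n ∉ P), Pi.one_apply]
      linarith [hvk i]
    · rw [chiW_perturb_of_notMem_of_mem hi (by tauto)]
      linarith [hδH i hi (by tauto)]

end Perturbation

section Anchor

variable {n : ℕ} {a : ℤ → ℤ} {v : ℤ → ℝ}

/-- The largest `δ` for which `perturb P δ v` stays in `Π`; it is attained at a constraint that
is slack at `v`. -/
theorem exists_max_perturbation (hv : v ∈ PiPoly n a) {P : Set ℤ} (hne : P.Nonempty)
    (hbdd : BddBelow P) (hE : ∀ j, v j = 0 → (j - 1 ∈ P ↔ j ∈ P))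
    (hH : ∀ j, chiW n v j = klev n a → (j - n ∈ P ↔ j ∈ P)) :
    ∃ δ > 0, (∀ j ∈ P, j - 1 ∉ P → δ ≤ v j) ∧ (∀ j ∉ P, j - n ∈ P → δ ≤ klev n a - chiW n v j) ∧
      ((∃ j ∈ P, j - 1 ∉ P ∧ v j = δ) ∨ (∃ j ∉ P, j - n ∈ P ∧ klev n a - chiW n v j = δ)) := by
  obtain ⟨⟨R, hR⟩, -⟩ := hv.1
  have hconst : ∀ j, R ≤ j → (j ∈ P ↔ R - 1 ∈ P) := fun j hj => by
    induction j, hj using Int.leInduction with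
    | base => exact (hE R (hR R le_rfl)).symm
    | succ j hj ih => rw [← ih, ← hE (j + 1) (hR _ (by omega)), add_sub_cancel_right]
  obtain ⟨b, hb⟩ := hbdd
  set S : Set ℝ := v '' {j | j ∈ P ∧ j - 1 ∉ P} ∪
    (fun j => klev n a - chiW n v j) '' {j | j ∉ P ∧ j - n ∈ P}
  have hSfin : S.Finite := by
    refine ((Set.finite_Icc b R).subset fun j hj => ?_).image v |>.union
      (((Set.finite_Icc b (R + n)).subset fun j hj => ?_).image _)
    · have := hb hj.1
      have : ¬ R ≤ j := fun h => hj.2 ((hE j (hR j h)).2 hj.1)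
      exact ⟨by omega, by omega⟩
    · have := hb hj.2
      have : ¬ R < j - n := fun h => hj.1 ((hconst j (by omega)).2 ((hconst _ h.le).1 hj.2))
      exact ⟨by omega, by omega⟩
  have hSne : S.Nonempty := by
    obtain ⟨j, hj, hmin⟩ := Int.exists_least_of_bdd ⟨b, fun _ h => hb h⟩ hne
    exact ⟨v j, .inl ⟨j, ⟨hj, fun h => by linarith [hmin _ h]⟩, rfl⟩⟩
  obtain ⟨δ, hδS, hδmin⟩ := S.exists_min_image id hSfin hSne
  refine ⟨δ, ?_, fun j hj hj' => hδmin _ (.inl ⟨j, ⟨hj, hj'⟩, rfl⟩),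
    fun j hj hj' => hδmin _ (.inr ⟨j, ⟨hj, hj'⟩, rfl⟩), ?_⟩
  · rcases hδS with ⟨j, ⟨hj, hj'⟩, rfl⟩ | ⟨j, ⟨hj, hj'⟩, rfl⟩
    · exact (hv.2.1 j).lt_of_ne fun h => hj' ((hE j h.symm).2 hj)
    · exact sub_pos.2 ((hv.2.2 j).lt_of_ne fun h => hj ((hH j h).1 hj'))
  · rcases hδS with ⟨j, hj, rfl⟩ | ⟨j, hj, rfl⟩
    exacts [.inl ⟨j, hj.1, hj.2, rfl⟩, .inr ⟨j, hj.1, hj.2, rfl⟩]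

/-- The perturbation keeps every constraint tight at `v` tight and makes one more tight, which is
impossible at a vertex. -/
theorem IsVertexPi.eq_empty_of_closed (hv : v ∈ PiPoly n a) (hvert : IsVertexPi n a v)
    {P : Set ℤ} (hbdd : BddBelow P) (hE : ∀ j, v j = 0 → (j - 1 ∈ P ↔ j ∈ P))
    (hH : ∀ j, chiW n v j = klev n a → (j - n ∈ P ↔ j ∈ P)) : P = ∅ := by
  by_contra hne
  obtain ⟨δ, hδ, hδE, hδH, hslack⟩ :=
    exists_max_perturbation hv (Set.nonempty_iff_ne_empty.2 hne) hbdd hE hH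
  obtain ⟨hzero, hchi⟩ := hvert.tight_of_tight (perturb_mem_PiPoly hv hbdd hE hδ.le hδE hδH)
    (fun j hj => (perturb_of_iff (hE j hj)).trans hj)
    (fun i hi => (chiW_perturb_of_iff (hH i hi)).trans hi)
  rcases hslack with ⟨j, hj, hj', rfl⟩ | ⟨j, hj, hj', hδj⟩
  · exact hδ.ne' (hzero j (by rw [perturb_of_mem_of_notMem hj hj', sub_self]))
  · refine hδ.ne' (hδj ▸ sub_eq_zero.2 (hchi j ?_).symm)
    rw [chiW_perturb_of_notMem_of_mem hj hj', ← hδj]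
    ring

theorem ThetaGraph.exists_latticePt_le (hper : Function.Periodic a n) (hv : v ∈ PiPoly n a)
    (hvert : IsVertexPi n a v) {N : ℤ} (hN : ∀ i ≤ N, v i = a i)
    (c : (ThetaGraph n a v).ConnectedComponent) :
    ∃ M ≤ N, ∃ m, (ThetaGraph n a v).connectedComponentMk (latticePt n M m) = c := by
  by_contra! hc
  set P := {M | ∃ m, (ThetaGraph n a v).connectedComponentMk (latticePt n M m) = c}
  have hP : P = ∅ := by
    refine hvert.eq_empty_of_closed hv ⟨N + 1, fun M ⟨m, hm⟩ => ?_⟩ (fun M hM => ?_)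
      fun M hM => ?_
    · by_contra! h
      exact hc M (by omega) m hm
    · have hadj m := SimpleGraph.ConnectedComponent.connectedComponentMk_eq_of_adj
        (adj_latticePt_sub_one hper hN hM m)
      exact ⟨fun ⟨m, hm⟩ => ⟨m, (hadj m).trans hm⟩, fun ⟨m, hm⟩ => ⟨m, (hadj m).symm.trans hm⟩⟩
    · have hadj m := SimpleGraph.ConnectedComponent.connectedComponentMk_eq_of_adj
        (adj_latticePt_sub hper hN hM m)
      refine ⟨fun ⟨m, hm⟩ => ⟨m + 1, (hadj (m + 1)).trans ?_⟩, fun ⟨m, hm⟩ => ⟨m - 1, ?_⟩⟩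
      · rwa [add_sub_cancel_right]
      · exact (hadj m).symm.trans hm
  obtain ⟨p, rfl⟩ := c.exists_rep
  refine hP.subset (⟨levelOf p, ?_⟩ : cutIdx n p ∈ P)
  rw [latticePt_cutIdx_levelOf]
  rfl

end Anchor

section Cycle

variable {n : ℕ} {a : ℤ → ℤ}

theorem cycG_adj_intCast (hn : 2 ≤ n) (hper : Function.Periodic a n) {x : ℤ}
    (hx : a (x + 1) = 0) : (cycG n a).Adj (x : ZMod n) ((x + 1 : ℤ) : ZMod n) := by
  have : Fact (1 < n) := ⟨by omega⟩
  refine (SimpleGraph.fromRel_adj _ _ _).2 ⟨?_, .inl ⟨by push_cast; rfl, ?_⟩⟩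
  · push_cast
    exact (add_ne_left.2 one_ne_zero).symm
  · rwa [← apply_eq_apply_val hper]

theorem cycG_reachable_of_forall_eq_zero (hn : 2 ≤ n) (hper : Function.Periodic a n)
    {x y : ℤ} (hxy : x ≤ y) (h : ∀ l ∈ Ioc x y, a l = 0) :
    (cycG n a).Reachable (x : ZMod n) (y : ZMod n) := by
  induction y, hxy using Int.leInduction with
  | base => rfl
  | succ y hxy ih =>
    refine (ih fun l hl => h l ?_).trans (cycG_adj_intCast hn hper (h _ ?_)).reachable
    · simp only [mem_Ioc] at hl ⊢; omega
    · simp only [mem_Ioc]; omega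

/-- After reducing `y` modulo `n`, the sum of `a` over `(x, y]` or over its complement in a
period vanishes. -/
theorem cycG_reachable_of_dvd (hn : 2 ≤ n) (hper : Function.Periodic a n)
    (hpos : ∀ i, 0 ≤ a i) (hk : 0 < klev n a) {x y : ℤ}
    (h : klev n a ∣ prefixSum a y - prefixSum a x) :
    (cycG n a).Reachable (x : ZMod n) (y : ZMod n) := by
  set r := (y - x) % n
  have hr0 : 0 ≤ r := Int.emod_nonneg _ (by omega)
  have hrn : r < n := Int.emod_lt_of_pos _ (by omega)
  have hy : y = x + r + (y - x) / n * n := by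
    have := Int.emod_add_mul_ediv (y - x) n
    linear_combination -this
  have hyr : ((x + r : ℤ) : ZMod n) = (y : ZMod n) :=
    (ZMod.intCast_eq_intCast_iff_dvd_sub _ _ _).2 ⟨(y - x) / n, by linear_combination hy⟩
  rw [← hyr]
  rw [hy, prefixSum_add_mul_period hper, add_sub_right_comm, dvd_add_left (dvd_mul_left _ _)] at h
  obtain ⟨t, ht⟩ := h
  have hlow := prefixSum_sub_prefixSum a (show x ≤ x + r by omega)
  have hhigh := prefixSum_sub_prefixSum a (show x + r ≤ x + n by omega)
  rw [prefixSum_add_period hper] at hhigh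
  have hlow0 : 0 ≤ ∑ l ∈ Ioc x (x + r), a l := sum_nonneg fun l _ => hpos l
  have hhigh0 : 0 ≤ ∑ l ∈ Ioc (x + r) (x + n), a l := sum_nonneg fun l _ => hpos l
  rcases show t ≤ 0 ∨ 1 ≤ t by omega with ht0 | ht1
  · refine cycG_reachable_of_forall_eq_zero hn hper (by omega) fun l hl => ?_
    refine (sum_eq_zero_iff_of_nonneg fun l _ => hpos l).1 ?_ l hl
    nlinarith
  · have hxn : ((x + n : ℤ) : ZMod n) = (x : ZMod n) := by simp
    rw [← hxn]
    refine (cycG_reachable_of_forall_eq_zero hn hper (by omega) fun l hl => ?_).symm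
    refine (sum_eq_zero_iff_of_nonneg fun l _ => hpos l).1 ?_ l hl
    nlinarith

end Cycle

section FarLeft

variable {n : ℕ} {a : ℤ → ℤ} {v : ℤ → ℝ} {N : ℤ}

theorem ThetaGraph.reachable_latticePt_sub_mul (hper : Function.Periodic a n)
    (hN : ∀ i ≤ N, v i = a i) {M : ℤ} (hM : M ≤ N) (m : ℤ) (t : ℕ) :
    (ThetaGraph n a v).Reachable (latticePt n M m) (latticePt n (M - t * n) (m - t)) := by
  induction t with
  | zero => simp
  | succ t ih =>
    have hMt : M - t * n ≤ N := by nlinarith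
    refine ih.trans ?_
    convert (adj_latticePt_sub hper hN (chiW_eq_klev_of_le hper hN hMt) (m - t)).reachable
      using 2 <;> push_cast <;> ring

theorem ThetaGraph.exists_reachable_of_intCast_eq (hper : Function.Periodic a n)
    (hN : ∀ i ≤ N, v i = a i) {M M' : ℤ} (hM : M ≤ N) (hM' : M' ≤ N)
    (h : (M : ZMod n) = M') (m : ℤ) :
    ∃ m', (ThetaGraph n a v).Reachable (latticePt n M m) (latticePt n M' m') := by
  obtain ⟨t, ht⟩ := (ZMod.intCast_eq_intCast_iff_dvd_sub M' M n).1 h.symm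
  obtain ⟨t, rfl | rfl⟩ := Int.eq_nat_or_neg t
  · refine ⟨m - t, ?_⟩
    convert reachable_latticePt_sub_mul hper hN hM m t using 3
    linear_combination -ht
  · refine ⟨m + t, ?_⟩
    convert (reachable_latticePt_sub_mul hper hN hM' (m + t) t).symm using 3
    · linear_combination ht
    · ring

theorem ThetaGraph.exists_reachable_of_cycG_adj (hn : 2 ≤ n) (hper : Function.Periodic a n)
    (hN : ∀ i ≤ N, v i = a i) {M : ℤ} (hM : M ≤ N) {r : ZMod n}
    (h : (cycG n a).Adj (M : ZMod n) r) (m : ℤ) :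
    ∃ M₁ ≤ N, (M₁ : ZMod n) = r ∧
      ∃ m₁, (ThetaGraph n a v).Reachable (latticePt n M m) (latticePt n M₁ m₁) := by
  have : NeZero n := ⟨by omega⟩
  have hzero {x : ℤ} (hx : x ≤ N) (hax : a ((x : ZMod n).val) = 0) :=
    adj_latticePt_sub_one hper hN (v := v)
      (by rw [hN x hx, apply_eq_apply_val hper, hax, Int.cast_zero])
  rcases ((SimpleGraph.fromRel_adj _ _ _).1 h).2 with ⟨rfl, hr⟩ | ⟨hr, hr₀⟩
  · -- an `H`-edge down to `M - n`, then an `E`-edge up to `M - n + 1`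
    refine ⟨M - n + 1, by omega, by push_cast; simp, m - 1, ?_⟩
    have hE := hzero (x := M - n + 1) (by omega) (by push_cast; simpa using hr) (m - 1)
    rw [add_sub_cancel_right] at hE
    exact (adj_latticePt_sub hper hN (chiW_eq_klev_of_le hper hN hM) m).reachable.trans
      hE.reachable.symm
  · refine ⟨M - 1, by omega, by push_cast; rw [hr, add_sub_cancel_right], m, ?_⟩
    exact (hzero hM hr₀ m).reachable

theorem ThetaGraph.exists_reachable_of_cycG_reachable (hn : 2 ≤ n)
    (hper : Function.Periodic a n) (hN : ∀ i ≤ N, v i = a i) {M M' : ℤ} (hM : M ≤ N)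
    (hM' : M' ≤ N) (h : (cycG n a).Reachable (M : ZMod n) (M' : ZMod n)) (m : ℤ) :
    ∃ m', (ThetaGraph n a v).Reachable (latticePt n M m) (latticePt n M' m') := by
  obtain ⟨w⟩ := h
  suffices ∀ {r r' : ZMod n} (w : (cycG n a).Walk r r') {M : ℤ}, M ≤ N → (M : ZMod n) = r →
      ∀ m, ∃ M₁ ≤ N, (M₁ : ZMod n) = r' ∧
        ∃ m₁, (ThetaGraph n a v).Reachable (latticePt n M m) (latticePt n M₁ m₁) by
    obtain ⟨M₁, hM₁, hr, m₁, h₁⟩ := this w hM rfl m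
    obtain ⟨m', h'⟩ := exists_reachable_of_intCast_eq hper hN hM₁ hM' hr m₁
    exact ⟨m', h₁.trans h'⟩
  intro r r' w
  induction w with
  | nil => exact fun {M} hM hr m => ⟨M, hM, hr, m, .rfl⟩
  | cons hadj _ ih =>
    rintro M hM rfl m
    obtain ⟨M₁, hM₁, hr₁, m₁, h₁⟩ := exists_reachable_of_cycG_adj hn hper hN hM hadj m
    obtain ⟨M₂, hM₂, hr₂, m₂, h₂⟩ := ih hM₁ hr₁ m₁
    exact ⟨M₂, hM₂, hr₂, m₂, h₁.trans h₂⟩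

theorem ThetaGraph.prefixSum_sub_eq_of_connectedComponentMk_eq (hper : Function.Periodic a n)
    (hN : ∀ i ≤ N, v i = a i) {M M' m m' : ℤ} (hM : M ≤ N) (hM' : M' ≤ N)
    (h : (ThetaGraph n a v).connectedComponentMk (latticePt n M m)
      = (ThetaGraph n a v).connectedComponentMk (latticePt n M' m')) :
    prefixSum a M' - prefixSum a M = (m' - m) * klev n a := by
  have hs := sPatR_eq_of_connectedComponentMk_eq h
  rw [sPatR_latticePt_of_le hper hN hM, sPatR_latticePt_of_le hper hN hM', Int.cast_inj] at hs
  linear_combination -hs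

theorem ThetaGraph.cycG_reachable_of_connectedComponentMk_eq (hn : 2 ≤ n)
    (hper : Function.Periodic a n) (hpos : ∀ i, 0 ≤ a i) (hk : 0 < klev n a)
    (hN : ∀ i ≤ N, v i = a i) {M M' m m' : ℤ} (hM : M ≤ N) (hM' : M' ≤ N)
    (h : (ThetaGraph n a v).connectedComponentMk (latticePt n M m)
      = (ThetaGraph n a v).connectedComponentMk (latticePt n M' m')) :
    (cycG n a).Reachable (M : ZMod n) (M' : ZMod n) :=
  cycG_reachable_of_dvd hn hper hpos hk
    ⟨m' - m, by rw [prefixSum_sub_eq_of_connectedComponentMk_eq hper hN hM hM' h, mul_comm]⟩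

end FarLeft

section Shift

variable {n : ℕ} {G : SimpleGraph (ℤ × ℤ)}

def shiftVec (n : ℕ) : ℤ × ℤ := (1 - n, n)

theorem shiftPt_eq_add (p : ℤ × ℤ) : shiftPt n p = p + shiftVec n := by
  ext <;> simp only [shiftPt, shiftVec, Prod.fst_add, Prod.snd_add]
  ring

theorem latticePt_add_zsmul_shiftVec (M m w : ℤ) :
    latticePt n M m + w • shiftVec n = latticePt n M (m + w) := by
  simp only [latticePt, shiftVec, Prod.ext_iff, Prod.fst_add, Prod.snd_add, Prod.smul_fst,
    Prod.smul_snd, smul_eq_mul]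
  constructor <;> ring

theorem exists_zsmul_of_eqvGen_shiftRel {c c' : G.ConnectedComponent}
    (h : Relation.EqvGen (shiftRel n G) c c') :
    ∃ w : ℤ, ∀ p,
      G.connectedComponentMk p = c ↔ G.connectedComponentMk (p + w • shiftVec n) = c' := by
  induction h with
  | rel c c' h =>
    refine ⟨1, fun p => ?_⟩
    have hmem : shiftPt n p ∈ shiftPt n '' {q | G.connectedComponentMk q = c} ↔
        G.connectedComponentMk p = c := (shiftEquiv n).injective.mem_set_image
    rw [one_smul, ← shiftPt_eq_add, ← hmem, ← show _ = _ from h]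
    rfl
  | refl => exact ⟨0, fun p => by rw [zero_smul, add_zero]⟩
  | symm c c' _ ih =>
    obtain ⟨w, hw⟩ := ih
    refine ⟨-w, fun p => ?_⟩
    rw [hw, neg_smul, neg_add_cancel_right]
  | trans c c' c'' _ _ ih ih' =>
    obtain ⟨w, hw⟩ := ih
    obtain ⟨w', hw'⟩ := ih'
    exact ⟨w + w', fun p => by rw [hw, hw', add_assoc, add_smul]⟩

theorem shiftRel_connectedComponentMk
    (hG : ∀ {p q}, G.Adj (shiftPt n p) (shiftPt n q) ↔ G.Adj p q) (p : ℤ × ℤ) :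
    shiftRel n G (G.connectedComponentMk p) (G.connectedComponentMk (shiftPt n p)) := by
  let φ : G ≃g G := ⟨shiftEquiv n, hG⟩
  ext q
  change G.connectedComponentMk q = G.connectedComponentMk (shiftEquiv n p) ↔
    q ∈ shiftEquiv n '' {q | G.connectedComponentMk q = G.connectedComponentMk p}
  rw [Set.mem_image_equiv]
  change _ ↔ G.connectedComponentMk ((shiftEquiv n).symm q) = G.connectedComponentMk p
  rw [SimpleGraph.ConnectedComponent.eq, SimpleGraph.ConnectedComponent.eq,
    ← SimpleGraph.Iso.reachable_iff (φ := φ) (u := (shiftEquiv n).symm q) (v := p)]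
  change _ ↔ G.Reachable (shiftEquiv n ((shiftEquiv n).symm q)) (shiftEquiv n p)
  rw [Equiv.apply_symm_apply]

theorem eqvGen_shiftRel_add_zsmul
    (hG : ∀ {p q}, G.Adj (shiftPt n p) (shiftPt n q) ↔ G.Adj p q) (p : ℤ × ℤ) (w : ℤ) :
    Relation.EqvGen (shiftRel n G) (G.connectedComponentMk p)
      (G.connectedComponentMk (p + w • shiftVec n)) := by
  induction w using Int.induction_on with
  | zero => simpa using .refl _
  | succ w ih =>
    refine ih.trans _ _ _ (.rel _ _ ?_)
    rw [add_smul, one_smul, ← add_assoc, ← shiftPt_eq_add]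
    exact shiftRel_connectedComponentMk hG _
  | pred w ih =>
    refine ih.trans _ _ _ (.symm _ _ (.rel _ _ ?_))
    convert shiftRel_connectedComponentMk hG (p + (-w - 1 : ℤ) • shiftVec n) using 2
    rw [shiftPt_eq_add, add_assoc, ← add_one_zsmul, sub_add_cancel]

end Shift

abbrev thetaShiftSetoid (n : ℕ) (a : ℤ → ℤ) (v : ℤ → ℝ) :
    Setoid (ThetaGraph n a v).ConnectedComponent :=
  Relation.EqvGen.setoid (shiftRel n (ThetaGraph n a v))

section Correspondence

variable {n : ℕ} {a : ℤ → ℤ} {v : ℤ → ℝ} {N : ℤ}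

theorem shiftClass_eq_of_cycG_reachable (hn : 2 ≤ n) (hper : Function.Periodic a n)
    (hN : ∀ i ≤ N, v i = a i) {M M' : ℤ} (hM : M ≤ N) (hM' : M' ≤ N)
    (h : (cycG n a).Reachable (M : ZMod n) (M' : ZMod n)) (m m' : ℤ) :
    Quotient.mk (thetaShiftSetoid n a v)
        ((ThetaGraph n a v).connectedComponentMk (latticePt n M m))
      = Quotient.mk _ ((ThetaGraph n a v).connectedComponentMk (latticePt n M' m')) := by
  obtain ⟨m'', hr⟩ := ThetaGraph.exists_reachable_of_cycG_reachable hn hper hN hM hM' h m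
  rw [SimpleGraph.ConnectedComponent.sound hr]
  apply Quotient.sound
  have := eqvGen_shiftRel_add_zsmul (ThetaGraph.adj_shiftPt_iff hper hN) (latticePt n M' m'')
    (m' - m'')
  rwa [latticePt_add_zsmul_shiftVec, add_sub_cancel] at this

theorem cycG_reachable_of_shiftClass_eq (hn : 2 ≤ n) (hper : Function.Periodic a n)
    (hpos : ∀ i, 0 ≤ a i) (hk : 0 < klev n a) (hN : ∀ i ≤ N, v i = a i) {M M' m m' : ℤ}
    (hM : M ≤ N) (hM' : M' ≤ N)
    (h : Quotient.mk (thetaShiftSetoid n a v)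
        ((ThetaGraph n a v).connectedComponentMk (latticePt n M m))
      = Quotient.mk _ ((ThetaGraph n a v).connectedComponentMk (latticePt n M' m'))) :
    (cycG n a).Reachable (M : ZMod n) (M' : ZMod n) := by
  obtain ⟨w, hw⟩ := exists_zsmul_of_eqvGen_shiftRel (Quotient.exact h)
  have hc := (hw (latticePt n M m)).1 rfl
  rw [latticePt_add_zsmul_shiftVec] at hc
  exact ThetaGraph.cycG_reachable_of_connectedComponentMk_eq hn hper hpos hk hN hM hM' hc

def farRep (n : ℕ) (N : ℤ) (r : ZMod n) : ℤ := N - (N - (r.cast : ℤ)) % n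

theorem farRep_le (hn : n ≠ 0) (N : ℤ) (r : ZMod n) : farRep n N r ≤ N :=
  sub_le_self _ (Int.emod_nonneg _ (by omega))

@[simp] theorem intCast_farRep (N : ℤ) (r : ZMod n) : ((farRep n N r : ℤ) : ZMod n) = r := by
  simp [farRep, ZMod.intCast_mod]

def toShiftClass (hn : 2 ≤ n) (hper : Function.Periodic a n) (hN : ∀ i ≤ N, v i = a i) :
    (cycG n a).ConnectedComponent → Quotient (thetaShiftSetoid n a v) :=
  SimpleGraph.ConnectedComponent.lift
    (fun r => Quotient.mk _ ((ThetaGraph n a v).connectedComponentMk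
      (latticePt n (farRep n N r) 0)))
    fun r r' w _ => shiftClass_eq_of_cycG_reachable hn hper hN (farRep_le (by omega) N r)
      (farRep_le (by omega) N r') (by simpa using w.reachable) 0 0

theorem toShiftClass_connectedComponentMk (hn : 2 ≤ n) (hper : Function.Periodic a n)
    (hN : ∀ i ≤ N, v i = a i) (r : ZMod n) :
    toShiftClass hn hper hN ((cycG n a).connectedComponentMk r)
      = Quotient.mk _ ((ThetaGraph n a v).connectedComponentMk (latticePt n (farRep n N r) 0)) :=
  rfl

theorem toShiftClass_bijective (hn : 2 ≤ n) (hper : Function.Periodic a n)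
    (hpos : ∀ i, 0 ≤ a i) (hk : 0 < klev n a) (hv : v ∈ PiPoly n a) (hvert : IsVertexPi n a v)
    (hN : ∀ i ≤ N, v i = a i) : Function.Bijective (toShiftClass hn hper hN) := by
  refine ⟨fun κ κ' h => ?_, fun Q => ?_⟩
  · induction κ using SimpleGraph.ConnectedComponent.ind with | h r =>
    induction κ' using SimpleGraph.ConnectedComponent.ind with | h r' =>
    rw [toShiftClass_connectedComponentMk, toShiftClass_connectedComponentMk] at h
    simpa using SimpleGraph.ConnectedComponent.sound (cycG_reachable_of_shiftClass_eq hn hper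
      hpos hk hN (farRep_le (by omega) N r) (farRep_le (by omega) N r') h)
  · induction Q using Quotient.ind with | _ c =>
    obtain ⟨M, hM, m, rfl⟩ := ThetaGraph.exists_latticePt_le hper hv hvert hN c
    exact ⟨(cycG n a).connectedComponentMk (M : ZMod n),
      shiftClass_eq_of_cycG_reachable hn hper hN (farRep_le (by omega) N _) hM (by simp) 0 m⟩

end Correspondence

section Rows

variable {n : ℕ} {a : ℤ → ℤ} {v : ℤ → ℝ} {N : ℤ}

/-- On a component `s = height (cutIdx n p) - k · levelOf p` is constant and `height` is bounded
above, so far down the rows the level is large and hence the cut index small. -/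
theorem ThetaGraph.exists_row_bound (hn : 1 ≤ n) (hper : Function.Periodic a n)
    (hk : 0 < klev n a) (hv : v ∈ PiPoly n a) (hN : ∀ i ≤ N, v i = a i)
    (c : (ThetaGraph n a v).ConnectedComponent) :
    ∃ I : ℤ, ∀ p, (ThetaGraph n a v).connectedComponentMk p = c → p.1 ≤ I → cutIdx n p ≤ N := by
  obtain ⟨⟨R, hR⟩, -⟩ := hv.1
  obtain ⟨p₀, rfl⟩ := c.exists_rep
  have hk' : (0 : ℝ) < klev n a := by exact_mod_cast hk
  set B : ℝ := (N + 1) * klev n a - ((n : ℝ) - 1) * (height a v N R - sPatR n a v p₀)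
  obtain ⟨I, hI⟩ := exists_int_lt (B / klev n a)
  refine ⟨I, fun p hp hpI => ?_⟩
  by_contra! hNp
  have hs := sPatR_eq_of_connectedComponentMk_eq hp
  rw [sPatR_eq hper hN] at hs
  have hrow : (p.1 : ℝ) = cutIdx n p - ((n : ℝ) - 1) * levelOf p := by
    rw [← latticePt_cutIdx_levelOf (n := n) p]
    simp only [latticePt_fst, cutIdx_latticePt, levelOf_latticePt]
    push_cast
    ring
  have hheight := height_le_height (a := a) (N := N) hv.2.1 hR (cutIdx n p)
  have hcut : (N : ℝ) + 1 ≤ cutIdx n p := by exact_mod_cast hNp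
  have hn' : (0 : ℝ) ≤ (n : ℝ) - 1 := by
    rw [sub_nonneg]
    exact_mod_cast hn
  have hpI' : (p.1 : ℝ) * klev n a < B :=
    (lt_div_iff₀ hk').1 (lt_of_le_of_lt (by exact_mod_cast hpI) hI)
  nlinarith

theorem ThetaGraph.eq_of_fst_eq (hper : Function.Periodic a n) (hk : 0 < klev n a)
    (hN : ∀ i ≤ N, v i = a i) {p q : ℤ × ℤ} (hp : cutIdx n p ≤ N) (hq : cutIdx n q ≤ N)
    (hpq : (ThetaGraph n a v).connectedComponentMk p = (ThetaGraph n a v).connectedComponentMk q)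
    (hres : (cutIdx n p : ZMod n) = cutIdx n q) (hrow : p.1 = q.1) : p = q := by
  rw [← latticePt_cutIdx_levelOf (n := n) p, ← latticePt_cutIdx_levelOf (n := n) q] at hpq hrow ⊢
  set M := cutIdx n p
  set M' := cutIdx n q
  obtain ⟨t, ht⟩ := (ZMod.intCast_eq_intCast_iff_dvd_sub M M' n).1 hres
  have hs := prefixSum_sub_eq_of_connectedComponentMk_eq hper hN hp hq hpq
  rw [show M' = M + t * n by linear_combination ht, prefixSum_add_mul_period hper] at hs
  have hm : levelOf q = levelOf p + t := by
    have := mul_right_cancel₀ hk.ne' (show (levelOf q - levelOf p) * klev n a = t * klev n a by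
      linarith)
    linarith
  rw [latticePt_fst, latticePt_fst, hm] at hrow
  have ht0 : t = 0 := by linear_combination -hrow - ht
  rw [show M' = M by linear_combination ht + n * ht0, hm, ht0, add_zero]

theorem ThetaGraph.exists_fst_eq (hper : Function.Periodic a n) (hN : ∀ i ≤ N, v i = a i)
    {M : ℤ} (hM : M ≤ N) (m : ℤ) {i : ℤ} (hi : i ≤ (latticePt n M m).1) :
    ∃ q, (ThetaGraph n a v).connectedComponentMk q
        = (ThetaGraph n a v).connectedComponentMk (latticePt n M m) ∧
      cutIdx n q ≤ N ∧ (cutIdx n q : ZMod n) = M ∧ q.1 = i := by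
  obtain ⟨t, ht⟩ := Int.eq_ofNat_of_zero_le (sub_nonneg.2 hi)
  refine ⟨latticePt n (M - t * n) (m - t),
    (SimpleGraph.ConnectedComponent.sound (reachable_latticePt_sub_mul hper hN hM m t)).symm,
    ?_, by simp, ?_⟩
  · rw [cutIdx_latticePt]
    nlinarith
  · rw [latticePt_fst] at ht ⊢
    linear_combination ht

theorem cycG_connectedComponentMk_eq_of_toShiftClass_eq (hn : 2 ≤ n)
    (hper : Function.Periodic a n) (hpos : ∀ i, 0 ≤ a i) (hk : 0 < klev n a)
    (hN : ∀ i ≤ N, v i = a i) {κ : (cycG n a).ConnectedComponent}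
    {c : (ThetaGraph n a v).ConnectedComponent}
    (h : toShiftClass hn hper hN κ = Quotient.mk _ c) {p : ℤ × ℤ} (hp : cutIdx n p ≤ N)
    (hc : (ThetaGraph n a v).connectedComponentMk p = c) :
    (cycG n a).connectedComponentMk (cutIdx n p : ZMod n) = κ := by
  induction κ using SimpleGraph.ConnectedComponent.ind with | h r =>
  rw [toShiftClass_connectedComponentMk, ← hc, ← latticePt_cutIdx_levelOf (n := n) p] at h
  have hr := cycG_reachable_of_shiftClass_eq hn hper hpos hk hN (farRep_le (by omega) N r) hp h
  rw [intCast_farRep] at hr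
  exact (SimpleGraph.ConnectedComponent.sound hr).symm

theorem exists_connectedComponentMk_eq_of_toShiftClass_eq (hn : 2 ≤ n)
    (hper : Function.Periodic a n) (hN : ∀ i ≤ N, v i = a i)
    {c : (ThetaGraph n a v).ConnectedComponent} {r : ZMod n}
    (h : toShiftClass hn hper hN ((cycG n a).connectedComponentMk r) = Quotient.mk _ c) :
    ∃ m, (ThetaGraph n a v).connectedComponentMk (latticePt n (farRep n N r) m) = c := by
  rw [toShiftClass_connectedComponentMk] at h
  obtain ⟨w, hw⟩ := exists_zsmul_of_eqvGen_shiftRel (Quotient.exact h)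
  refine ⟨0 + w, ?_⟩
  rw [← latticePt_add_zsmul_shiftVec]
  exact (hw _).1 rfl

/-- Far down, the points of `c` in a row are far-left points, and their cut indices represent
each residue of the corresponding cycle component exactly once. -/
theorem card_row_eq_of_toShiftClass_eq (hn : 2 ≤ n) (hper : Function.Periodic a n)
    (hpos : ∀ i, 0 ≤ a i) (hk : 0 < klev n a) (hv : v ∈ PiPoly n a) (hN : ∀ i ≤ N, v i = a i)
    {κ : (cycG n a).ConnectedComponent} {c : (ThetaGraph n a v).ConnectedComponent}
    (h : toShiftClass hn hper hN κ = Quotient.mk _ c) :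
    ∃ I : ℤ, ∀ i ≤ I,
      Nat.card {p : ℤ × ℤ // (ThetaGraph n a v).connectedComponentMk p = c ∧ p.1 = i}
        = Nat.card {r : ZMod n // (cycG n a).connectedComponentMk r = κ} := by
  obtain ⟨I₁, hI₁⟩ := ThetaGraph.exists_row_bound (by omega) hper hk hv hN c
  have hrows : ∀ r : ZMod n, ∃ I : ℤ, (cycG n a).connectedComponentMk r = κ → ∀ i ≤ I,
      ∃ p, (ThetaGraph n a v).connectedComponentMk p = c ∧ cutIdx n p ≤ N ∧
        (cutIdx n p : ZMod n) = r ∧ p.1 = i := fun r => by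
    by_cases hr : (cycG n a).connectedComponentMk r = κ
    · subst hr
      obtain ⟨m, hm⟩ := exists_connectedComponentMk_eq_of_toShiftClass_eq hn hper hN h
      refine ⟨(latticePt n (farRep n N r) m).1, fun _ i hi => ?_⟩
      obtain ⟨p, hpc, hp⟩ := ThetaGraph.exists_fst_eq hper hN (farRep_le (by omega) N r) m hi
      exact ⟨p, hpc.trans hm, by simpa using hp⟩
    · exact ⟨0, fun h' => absurd h' hr⟩
  choose I₂ hI₂ using hrows
  have : NeZero n := ⟨by omega⟩
  obtain ⟨I₃, hI₃⟩ := (Set.finite_range I₂).bddBelow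
  refine ⟨min I₁ I₃, fun i hi => Nat.card_congr (Equiv.ofBijective
    (fun p => ⟨cutIdx n p.1, cycG_connectedComponentMk_eq_of_toShiftClass_eq hn hper hpos hk hN h
      (hI₁ p.1 p.2.1 (p.2.2.trans_le (hi.trans (min_le_left _ _)))) p.2.1⟩) ⟨?_, ?_⟩)⟩
  · rintro ⟨p, hpc, hpi⟩ ⟨q, hqc, hqi⟩ hpq
    have hI : i ≤ I₁ := hi.trans (min_le_left _ _)
    exact Subtype.ext (ThetaGraph.eq_of_fst_eq hper hk hN (hI₁ p hpc (hpi ▸ hI))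
      (hI₁ q hqc (hqi ▸ hI)) (hpc.trans hqc.symm) (congrArg Subtype.val hpq) (hpi.trans hqi.symm))
  · rintro ⟨r, hr⟩
    obtain ⟨p, hpc, -, hpr, hpi⟩ :=
      hI₂ r hr i ((hi.trans (min_le_right _ _)).trans (hI₃ ⟨r, rfl⟩))
    exact ⟨⟨p, hpc, hpi⟩, Subtype.ext hpr⟩

end Rows

/-- For a vertex `v` of `Π` (with `λ ≠ 0`), the components of `Δ_v` — that is, the
shift-equivalence classes of connected components of the equality graph `Θ(v)` — are in
bijection with the `m(λ)` path components of the cycle subgraph, in such a way that a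
class corresponding to a path component of size `l_r` consists of components having
exactly `l_r` vertices in each row `i` for all sufficiently small `i`. -/
theorem stmt18 (n : ℕ) (hn : 2 ≤ n) (a : ℤ → ℤ)
    (hper : ∀ i, a (i + n) = a i) (hpos : ∀ i, 0 ≤ a i) (hk : 0 < klev n a)
    (v : ℤ → ℝ) (hv : v ∈ PiPoly n a) (hvert : IsVertexPi n a v) :
    ∃ e : (cycG n a).ConnectedComponent ≃
        Quotient (Relation.EqvGen.setoid (shiftRel n (ThetaGraph n a v))),
      ∀ (κ : (cycG n a).ConnectedComponent)
        (c : (ThetaGraph n a v).ConnectedComponent),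
        e κ = Quotient.mk (Relation.EqvGen.setoid (shiftRel n (ThetaGraph n a v))) c →
        ∃ N : ℤ, ∀ i ≤ N,
          Nat.card {p : ℤ × ℤ // (ThetaGraph n a v).connectedComponentMk p = c ∧ p.1 = i}
            = Nat.card {r : ZMod n // (cycG n a).connectedComponentMk r = κ} := by
  obtain ⟨-, N, hN⟩ := hv.1
  exact ⟨Equiv.ofBijective _ (toShiftClass_bijective hn hper hpos hk hv hvert hN),
    fun κ c h => card_row_eq_of_toShiftClass_eq hn hper hpos hk hv hN h⟩
end
end
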